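/- arXiv:2412.19203 — 8 statements merged into one kernel-verified Lean document; each statement's English description precedes it below -/
import Mathlib

section
/- For every integer s ≥ 3, the characteristic polynomial det(X·I − A) of the adjacency matrix A of F₁(s) over ℝ equals (X+2)·(X+1)^{s−2}·(X−1)^{s}·(X³ − (2s−1)X − 2). Equivalently, the spectrum of F₁(s) consists of one copy of −2, s−2 copies of −1, s copies of 1, and the three roots of x³ − (2s−1)x − 2. -/
/-- Vertex type of the graph `F₁(s)`. -/
inductive F1Vert (s : ℕ) : Type
  | v1 : F1Vert s
  | v2 : F1Vert s
  | a1 : F1Vert s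
  | a2 : F1Vert s
  | u : Fin s → F1Vert s
  | p : {i : Fin s // 2 ≤ (i : ℕ)} → F1Vert s
  deriving DecidableEq, Fintype

/-- Base relation generating the edges of `F₁(s)` (indices are 0-based: `u 0 = u₁`, …;
pendant vertices `p i` exist for `i ≥ 2`, i.e. at each of `u₃, …, u_s`). -/
def F1Rel (s : ℕ) : F1Vert s → F1Vert s → Prop
  | .v2, .u _ => True
  | .v1, .u i => 2 ≤ (i : ℕ)
  | .v1, .a1 => True
  | .a1, .u i => (i : ℕ) = 0
  | .v1, .a2 => True
  | .a2, .u i => (i : ℕ) = 1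
  | .u i, .p j => i = j.1
  | _, _ => False

/-- The graph `F₁(s)`: obtained from `K_{2,s}` with parts `{v₁, v₂}` and `{u₁, …, u_s}` by
subdividing the edges `v₁u₁` and `v₁u₂` (creating `a₁`, `a₂`) and attaching a pendant edge
(to `p_i`) at each of `u₃, …, u_s`. -/
def F1 (s : ℕ) : SimpleGraph (F1Vert s) := SimpleGraph.fromRel (F1Rel s)
noncomputable instance (s : ℕ) : DecidableRel (F1 s).Adj := Classical.decRel _

/-!
Order the vertices as the hubs `v₁, v₂`, then `u₁, …, u_s`, then the outer vertices
`a₁, a₂, p₃, …, p_s`, the `k`-th of which is the only outer neighbour of `u_k`. The outer vertices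
are independent and so are the `u`'s, so two Schur complements with scalar pivot blocks `x • 1`
and `(x - x⁻¹) • 1` reduce `det (x • 1 - A)` to `x ^ s (x - x⁻¹) ^ s` times a `2 × 2` determinant
on the hubs. Knowing the identity for every real `x > 1` determines the characteristic polynomial.
-/

open Matrix Finset

namespace Matrix

variable {m n K : Type*} [DecidableEq m] [DecidableEq n] [Field K]

theorem smul_one_sub_fromBlocks (x : K) (A : Matrix m m K) (B : Matrix m n K)
    (C : Matrix n m K) (D : Matrix n n K) :
    x • 1 - fromBlocks A B C D = fromBlocks (x • 1 - A) (-B) (-C) (x • 1 - D) := by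
  rw [← fromBlocks_one, fromBlocks_smul]
  ext (i | i) (j | j) <;> simp

theorem det_fromBlocks_smul_one₂₂ [Fintype m] [Fintype n] (A : Matrix m m K) (B : Matrix m n K)
    (C : Matrix n m K) {y : K} (hy : y ≠ 0) :
    (fromBlocks A B C (y • 1)).det = y ^ Fintype.card n * (A - y⁻¹ • (B * C)).det := by
  let _ : Invertible (y • (1 : Matrix n n K)) :=
    ⟨y⁻¹ • 1, by simp [smul_smul, hy], by simp [smul_smul, hy]⟩
  rw [det_fromBlocks₂₂, det_smul, det_one, mul_one,
    show ⅟(y • (1 : Matrix n n K)) = y⁻¹ • 1 from rfl, Matrix.mul_smul, Matrix.mul_one,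
    Matrix.smul_mul]

end Matrix

theorem Fin.sum_ite_two_le {M : Type*} [AddCommMonoid M] {s : ℕ} (hs : 2 ≤ s) (a b : M) :
    ∑ k : Fin s, (if 2 ≤ (k : ℕ) then a else b) = (s - 2) • a + 2 • b := by
  have hlt : #{k : Fin s | (k : ℕ) < 2} = 2 := by rw [Fin.card_filter_val_lt]; omega
  have hle : #{k : Fin s | 2 ≤ (k : ℕ)} = s - 2 := by
    have := card_filter_add_card_filter_not (s := univ) (fun k : Fin s => 2 ≤ (k : ℕ))
    simp only [not_le, hlt, card_univ, Fintype.card_fin] at this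
    omega
  rw [sum_ite, Finset.sum_const, Finset.sum_const, hle]
  simp only [not_le, hlt]

namespace F1Vert

variable {s : ℕ}

def leg (k : Fin s) : F1Vert s :=
  if h : 2 ≤ (k : ℕ) then .p ⟨k, h⟩ else if (k : ℕ) = 0 then .a1 else .a2

def sumEquiv (hs : 2 ≤ s) : (Fin 2 ⊕ Fin s) ⊕ Fin s ≃ F1Vert s where
  toFun := Sum.elim (Sum.elim ![.v1, .v2] .u) leg
  invFun
    | .v1 => .inl (.inl 0)
    | .v2 => .inl (.inl 1)
    | .u i => .inl (.inr i)
    | .a1 => .inr ⟨0, by omega⟩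
    | .a2 => .inr ⟨1, by omega⟩
    | .p j => .inr j.1
  left_inv := by
    rintro ((v | i) | ⟨_ | _ | k, hk⟩)
    · fin_cases v <;> rfl
    · rfl
    all_goals simp [leg]
  right_inv := by
    rintro (_ | _ | _ | _ | _ | ⟨j, hj⟩) <;> simp_all [leg]

end F1Vert

namespace F1

variable {s : ℕ}

/-- Row `0` is `v₁`, row `1` is `v₂`; columns are the `u k`. -/
def hubAdj (s : ℕ) : Matrix (Fin 2) (Fin s) ℝ := of ![fun i => if 2 ≤ (i : ℕ) then 1 else 0, 1]

/-- Row `0` is `v₁`, row `1` is `v₂`; columns are the `F1Vert.leg k`. -/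
def legAdj (s : ℕ) : Matrix (Fin 2) (Fin s) ℝ := of ![fun k => if 2 ≤ (k : ℕ) then 0 else 1, 0]

theorem adjMatrix_submatrix_sumEquiv (hs : 2 ≤ s) :
    ((F1 s).adjMatrix ℝ).submatrix (F1Vert.sumEquiv hs) (F1Vert.sumEquiv hs) =
      fromBlocks (fromBlocks 0 (hubAdj s) (hubAdj s)ᵀ 0) (fromRows (legAdj s) 1)
        (fromRows (legAdj s) 1)ᵀ 0 := by
  ext ((v | i) | k) ((w | j) | l)
  all_goals
    rw [submatrix_apply, SimpleGraph.adjMatrix_apply]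
    simp only [F1Vert.sumEquiv, Equiv.coe_fn_mk, Sum.elim_inl, Sum.elim_inr]
  all_goals try fin_cases v
  all_goals try fin_cases w
  all_goals try obtain ⟨_ | _ | k, hk⟩ := k
  all_goals try obtain ⟨_ | _ | l, hl⟩ := l
  all_goals simp [F1, F1Rel, hubAdj, legAdj, fromRows_apply_inl, fromRows_apply_inr, one_apply,
    F1Vert.leg, Fin.ext_iff]

theorem legAdj_mul_transpose (hs : 2 ≤ s) : legAdj s * (legAdj s)ᵀ = !![2, 0; 0, 0] := by
  ext v w
  fin_cases v <;> fin_cases w <;>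
    simp [legAdj, mul_apply, ite_mul_ite, Fin.sum_ite_two_le hs, -mul_ite, -ite_mul]

theorem hubAdj_add_smul_legAdj_mul_transpose (hs : 2 ≤ s) (x : ℝ) :
    (hubAdj s + x⁻¹ • legAdj s) * (hubAdj s + x⁻¹ • legAdj s)ᵀ =
      !![(s - 2 : ℝ) + 2 * x⁻¹ ^ 2, (s - 2 : ℝ) + 2 * x⁻¹; (s - 2 : ℝ) + 2 * x⁻¹, s] := by
  have hrows : hubAdj s + x⁻¹ • legAdj s =
      of ![fun k : Fin s => if 2 ≤ (k : ℕ) then 1 else x⁻¹, 1] := by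
    ext v k
    fin_cases v <;> simp [hubAdj, legAdj]
    split_ifs <;> simp
  rw [hrows]
  ext v w
  fin_cases v <;> fin_cases w <;> simp [mul_apply, Fin.sum_ite_two_le hs, ← sq, Nat.cast_sub hs]

theorem det_hubSchurComplement (c : ℝ) {x : ℝ} (hx0 : x ≠ 0) (hx1 : x ^ 2 ≠ 1) :
    (x + 1) ^ 2 * (x • 1 - x⁻¹ • !![2, 0; 0, 0] -
      (x - x⁻¹)⁻¹ • !![c - 2 + 2 * x⁻¹ ^ 2, c - 2 + 2 * x⁻¹; c - 2 + 2 * x⁻¹, c]).det =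
      (x + 2) * (x ^ 3 - (2 * c - 1) * x - 2) := by
  have : x ^ 2 - 1 ≠ 0 := sub_ne_zero.mpr hx1
  rw [det_fin_two, show x - x⁻¹ = (x ^ 2 - 1) / x by field_simp]
  simp only [smul_of, smul_cons, smul_eq_mul, mul_zero, Matrix.smul_empty, inv_div, inv_pow,
    Matrix.sub_apply, Matrix.smul_apply, one_apply_eq, mul_one, of_apply, cons_val', cons_val_zero,
    cons_val_fin_one, cons_val_one, sub_zero, ne_eq, zero_ne_one, not_false_eq_true, one_apply_ne,
    sub_self, zero_sub, one_ne_zero, mul_neg, neg_mul, neg_neg]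
  field_simp
  ring

theorem det_smul_one_sub_adjMatrix (hs : 2 ≤ s) {x : ℝ} (hx0 : x ≠ 0) (hx1 : x ^ 2 ≠ 1) :
    (x • (1 : Matrix (F1Vert s) (F1Vert s) ℝ) - (F1 s).adjMatrix ℝ).det =
      (x + 2) * (x + 1) ^ (s - 2) * (x - 1) ^ s * (x ^ 3 - (2 * s - 1) * x - 2) := by
  have hx1' : x - x⁻¹ ≠ 0 := by
    rw [show x - x⁻¹ = (x ^ 2 - 1) / x by field_simp]
    exact div_ne_zero (sub_ne_zero.mpr hx1) hx0
  set e := F1Vert.sumEquiv hs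
  have hsub : (x • 1 - (F1 s).adjMatrix ℝ).submatrix e e =
      x • (1 : Matrix _ _ ℝ).submatrix e e - ((F1 s).adjMatrix ℝ).submatrix e e := rfl
  have hschur : x • 1 - fromBlocks 0 (hubAdj s) (hubAdj s)ᵀ 0
        - x⁻¹ • (-fromRows (legAdj s) 1 * -(fromRows (legAdj s) 1)ᵀ) =
      fromBlocks (x • 1 - x⁻¹ • (legAdj s * (legAdj s)ᵀ)) (-(hubAdj s + x⁻¹ • legAdj s))
        (-(hubAdj s + x⁻¹ • legAdj s))ᵀ ((x - x⁻¹) • 1) := by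
    rw [Matrix.neg_mul, Matrix.mul_neg, neg_neg, transpose_fromRows, fromRows_mul_fromCols,
      smul_one_sub_fromBlocks, fromBlocks_smul, sub_eq_add_neg (fromBlocks _ _ _ _), fromBlocks_neg,
      fromBlocks_add]
    congr 1 <;> simp only [Matrix.mul_one, Matrix.one_mul, transpose_one, transpose_add,
      transpose_neg, transpose_smul, sub_zero] <;> module
  rw [← det_submatrix_equiv_self e, hsub, submatrix_one_equiv, adjMatrix_submatrix_sumEquiv,
    smul_one_sub_fromBlocks, sub_zero, det_fromBlocks_smul_one₂₂ _ _ _ hx0, hschur,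
    det_fromBlocks_smul_one₂₂ _ _ _ hx1', transpose_neg, Matrix.neg_mul, Matrix.mul_neg, neg_neg,
    hubAdj_add_smul_legAdj_mul_transpose hs, legAdj_mul_transpose hs, Fintype.card_fin]
  have hpow : x ^ s * (x - x⁻¹) ^ s = (x - 1) ^ s * (x + 1) ^ (s - 2) * (x + 1) ^ 2 := by
    rw [← mul_pow, mul_assoc, ← pow_add, Nat.sub_add_cancel hs, ← mul_pow]
    congr 1
    field_simp
    ring
  rw [← mul_assoc, hpow, mul_assoc _ ((x + 1) ^ 2), det_hubSchurComplement _ hx0 hx1]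
  ring

end F1

open Polynomial in
/-- for every integer `s ≥ 3`, the characteristic polynomial
`det (X • I - A)` of the adjacency matrix `A` of `F₁(s)` over `ℝ` equals
`(X + 2) (X + 1)^(s - 2) (X - 1)^s (X³ - (2s - 1)·X - 2)`. -/
theorem charpoly_F1 (s : ℕ) (hs : 3 ≤ s) :
    ((F1 s).adjMatrix ℝ).charpoly =
      (X + 2) * (X + 1) ^ (s - 2) * (X - 1) ^ s *
        (X ^ 3 - C (2 * (s : ℝ) - 1) * X - 2) := by
  refine eq_of_infinite_eval_eq _ _ ((Set.Ioi_infinite 1).mono fun x (hx : 1 < x) => ?_)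
  have hx0 : x ≠ 0 := by positivity
  have hx1 : x ^ 2 ≠ 1 := by nlinarith
  rw [Set.mem_ofPred_eq, eval_charpoly, scalar_apply, ← smul_one_eq_diagonal,
    F1.det_smul_one_sub_adjMatrix (by omega) hx0 hx1]
  simp
end

section
/- Every graph in 𝓕₂ ∪ {G₀} is an induced subgraph of some member of 𝓕₁: for all integers 0 ≤ k ≤ t there exists s ≥ 3 such that the spider S(t,k) is isomorphic to an induced subgraph of F₁(s), and G₀ is isomorphic to an induced subgraph of F₁(3). -/
/-- Base relation for the spider `S(t,k)`: vertex `Sum.inl ()` is the center `c`,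
`Sum.inr (Sum.inl j)` is the leaf `ℓ_{j+1}` of the star `K_{1,t}`, and
`Sum.inr (Sum.inr j)` is the pendant vertex `m_{j+1}` attached to `ℓ_{j+1}`. -/
def SpiderRel (t k : ℕ) :
    (Unit ⊕ Fin t ⊕ Fin k) → (Unit ⊕ Fin t ⊕ Fin k) → Prop
  | .inl _, .inr (.inl _) => True
  | .inr (.inl i), .inr (.inr j) => (i : ℕ) = (j : ℕ)
  | _, _ => False

/-- The spider `S(t,k)` (for `k ≤ t`): the tree obtained from the star `K_{1,t}` by attaching
a new pendant vertex to each of the first `k` leaves. -/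
def Spider (t k : ℕ) : SimpleGraph (Unit ⊕ Fin t ⊕ Fin k) :=
  SimpleGraph.fromRel (SpiderRel t k)

/-- The 6-vertex tree `G₀` with vertices `c = 0`, `a = 1`, `b = 2`, `d = 3`, `e = 4`, `f = 5`
and edges `ca, cb, cd, de, df` (obtained from `K_{1,3}` by attaching two pendant edges to one
of its leaves). -/
def G0 : SimpleGraph (Fin 6) :=
  SimpleGraph.fromRel (fun i j =>
    (i = 0 ∧ j = 1) ∨ (i = 0 ∧ j = 2) ∨ (i = 0 ∧ j = 3) ∨
    (i = 3 ∧ j = 4) ∨ (i = 3 ∧ j = 5))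

/-!
Both embeddings are explicit. In `F₁(s)` the vertex `v₂` is adjacent to every `u_i`, the `u_i`
are pairwise non-adjacent and `p_i` is a leaf at `u_i`; so for `s ≥ t + 2` the centre, leaves and
pendant vertices of `S(t,k)` can go to `v₂`, to `u₃, …, u_{t+2}` and to the matching `p_i`.
For `G₀`, map `c, a, b, d, e, f ↦ v₁, a₁, a₂, u₃, v₂, p₃` in `F₁(3)`.
-/

instance F1Rel.decidableRel (s : ℕ) : DecidableRel (F1Rel s) := fun a b => by
  cases a <;> cases b <;> simp only [F1Rel] <;> infer_instance

instance F1.decidableAdj (s : ℕ) : DecidableRel (F1 s).Adj := fun a b =>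
  decidable_of_iff _ (SimpleGraph.fromRel_adj (F1Rel s) a b).symm

instance G0.decidableAdj : DecidableRel G0.Adj := fun a b =>
  decidable_of_iff _ (SimpleGraph.fromRel_adj _ a b).symm

section Spider

variable {t k s : ℕ}

def spiderToF1 (hk : k ≤ t) (hs : t + 2 ≤ s) : Unit ⊕ Fin t ⊕ Fin k → F1Vert s
  | .inl _ => .v2
  | .inr (.inl j) => .u ⟨j + 2, by omega⟩
  | .inr (.inr j) => .p ⟨⟨j + 2, by omega⟩, by simp⟩

theorem spiderToF1_injective (hk : k ≤ t) (hs : t + 2 ≤ s) :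
    Function.Injective (spiderToF1 hk hs) := by
  rintro (_ | a | a) (_ | b | b) h <;>
    simp_all [spiderToF1, Fin.ext_iff]

theorem F1_adj_spiderToF1_iff (hk : k ≤ t) (hs : t + 2 ≤ s) (a b : Unit ⊕ Fin t ⊕ Fin k) :
    (F1 s).Adj (spiderToF1 hk hs a) (spiderToF1 hk hs b) ↔ (Spider t k).Adj a b := by
  rcases a with _ | a | a <;> rcases b with _ | b | b <;>
    simp [spiderToF1, Spider, F1, SpiderRel, F1Rel, Fin.ext_iff]

def spiderEmbedding (hk : k ≤ t) (hs : t + 2 ≤ s) : Spider t k ↪g F1 s where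
  toFun := spiderToF1 hk hs
  inj' := spiderToF1_injective hk hs
  map_rel_iff' := F1_adj_spiderToF1_iff hk hs _ _

end Spider

def G0ToF1 : Fin 6 → F1Vert 3 := ![.v1, .a1, .a2, .u 2, .v2, .p ⟨2, by decide⟩]

theorem F1_adj_G0ToF1_iff (a b : Fin 6) : (F1 3).Adj (G0ToF1 a) (G0ToF1 b) ↔ G0.Adj a b := by
  revert a b
  decide

def G0Embedding : G0 ↪g F1 3 where
  toFun := G0ToF1
  inj' := by decide
  map_rel_iff' := F1_adj_G0ToF1_iff _ _

/-- every graph in `𝓕₂ ∪ {G₀}` is an induced subgraph of some member of `𝓕₁`: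
for all integers `0 ≤ k ≤ t` there is `s ≥ 3` such that the spider `S(t,k)` embeds as an
induced subgraph into `F₁(s)`, and `G₀` embeds as an induced subgraph into `F₁(3)`. -/
theorem spider_and_G0_embed_into_F1 :
    (∀ t k : ℕ, k ≤ t → ∃ s : ℕ, 3 ≤ s ∧ Nonempty (Spider t k ↪g F1 s)) ∧
      Nonempty (G0 ↪g F1 3) :=
  ⟨fun t _ hk => ⟨t + 3, by omega, ⟨spiderEmbedding hk (by omega)⟩⟩, ⟨G0Embedding⟩⟩
end

section
/- If a graph G is isomorphic to an induced subgraph of F₁(s) for some integer s ≥ 3, then λ₂(G) ≤ 1. -/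
/-- The adjacency matrix of a simple graph over `ℝ` is Hermitian. -/
lemma adjMatrix_isHermitian {V : Type*} [Fintype V] (G : SimpleGraph V)
    [DecidableRel G.Adj] : ((G.adjMatrix ℝ)).IsHermitian := by
  rw [Matrix.IsHermitian, Matrix.conjTranspose_eq_transpose_of_trivial]
  exact G.isSymm_adjMatrix

/-- The number of eigenvalues (counted with multiplicity) of the real adjacency matrix of `G`
satisfying the predicate `p`. -/
noncomputable def eigCount {V : Type*} [Fintype V] [DecidableEq V]
    (G : SimpleGraph V) (p : ℝ → Prop) : ℕ := by
  classical
  exact (Finset.univ.filter fun i =>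
    p ((adjMatrix_isHermitian G).eigenvalues i)).card
/-! The adjacency matrix `A` of `F₁(s)` satisfies `A ≤ I + w wᵀ` in the Loewner order for an
explicit weight vector `w`, the slack being an explicit sum of squares. Restricting `w` to an
induced subgraph gives the same bound there. If two eigenvalues exceeded `1`, the plane spanned by
their eigenvectors would contain a nonzero vector orthogonal to `w`, on which the quadratic form of
`A` exceeds that of `I + w wᵀ`. -/

open Matrix Finset Function

theorem Matrix.IsHermitian.card_lt_eigenvalues_le_one {n : Type*} [Fintype n] [DecidableEq n]
    {A : Matrix n n ℝ} (hA : A.IsHermitian) {c : ℝ} (w : n → ℝ)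
    (hw : ∀ x, x ⬝ᵥ A *ᵥ x ≤ c * (x ⬝ᵥ x) + (w ⬝ᵥ x) ^ 2) :
    #{i | c < hA.eigenvalues i} ≤ 1 := by
  by_contra! hcard
  obtain ⟨i, hi, j, hj, hij⟩ := one_lt_card.mp hcard
  simp only [mem_filter, mem_univ, true_and] at hi hj
  set e : n → n → ℝ := fun k => ⇑(hA.eigenvectorBasis k)
  have he : ∀ k l, e k ⬝ᵥ e l = if k = l then 1 else 0 := fun k l => by
    simpa [EuclideanSpace.inner_eq_star_dotProduct, dotProduct_comm, eq_comm] using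
      orthonormal_iff_ite.mp hA.eigenvectorBasis.orthonormal l k
  have hAe : ∀ k, A *ᵥ e k = hA.eigenvalues k • e k := hA.mulVec_eigenvectorBasis
  obtain ⟨α, β, hαβ, hw0⟩ :
      ∃ α β : ℝ, 0 < α ^ 2 + β ^ 2 ∧ α * (w ⬝ᵥ e i) + β * (w ⬝ᵥ e j) = 0 := by
    by_cases h : w ⬝ᵥ e i = 0
    · exact ⟨1, 0, by norm_num, by simp [h]⟩
    · exact ⟨w ⬝ᵥ e j, -(w ⬝ᵥ e i),
        add_pos_of_nonneg_of_pos (sq_nonneg _) (sq_pos_of_ne_zero (neg_ne_zero.mpr h)), by ring⟩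
  have hx := hw (α • e i + β • e j)
  simp only [mulVec_add, mulVec_smul, hAe, add_dotProduct, dotProduct_add, smul_dotProduct,
    dotProduct_smul, smul_eq_mul, he, hij, hij.symm, if_true, if_false, hw0] at hx
  -- `α² λᵢ + β² λⱼ ≥ min λᵢ λⱼ * (α² + β²) > c * (α² + β²)`
  nlinarith [mul_le_mul_of_nonneg_left
      (min_le_left (hA.eigenvalues i) (hA.eigenvalues j)) (sq_nonneg α),
    mul_le_mul_of_nonneg_left (min_le_right (hA.eigenvalues i) (hA.eigenvalues j)) (sq_nonneg β),
    mul_lt_mul_of_pos_left (lt_min hi hj) hαβ]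

section Submatrix

variable {V W R : Type*} [Fintype V] [Fintype W] [CommSemiring R] {f : V → W}

lemma dotProduct_extend_zero (hf : Injective f) (u : W → R) (x : V → R) :
    u ⬝ᵥ extend f x 0 = (u ∘ f) ⬝ᵥ x :=
  (Fintype.sum_of_injective f hf _ _ (fun _ hj => by simp [extend_apply' _ _ _ hj])
    fun i => by simp [hf.extend_apply]).symm

lemma dotProduct_submatrix_mulVec (hf : Injective f) (B : Matrix W W R) (x : V → R) :
    x ⬝ᵥ B.submatrix f f *ᵥ x = extend f x 0 ⬝ᵥ B *ᵥ extend f x 0 := by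
  have hrow : (B *ᵥ extend f x 0) ∘ f = B.submatrix f f *ᵥ x := by
    ext i
    exact dotProduct_extend_zero hf (B (f i)) x
  rw [dotProduct_comm (extend f x 0), dotProduct_extend_zero hf, hrow, dotProduct_comm]

lemma dotProduct_submatrix_mulVec_le {B : Matrix W W ℝ} {c : ℝ} {w : W → ℝ}
    (hB : ∀ y, y ⬝ᵥ B *ᵥ y ≤ c * (y ⬝ᵥ y) + (w ⬝ᵥ y) ^ 2) (hf : Injective f)
    (x : V → ℝ) : x ⬝ᵥ B.submatrix f f *ᵥ x ≤ c * (x ⬝ᵥ x) + ((w ∘ f) ⬝ᵥ x) ^ 2 := by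
  have hself : x ⬝ᵥ x = extend f x 0 ⬝ᵥ extend f x 0 := by
    rw [dotProduct_extend_zero hf, extend_comp hf]
  rw [dotProduct_submatrix_mulVec hf, hself, ← dotProduct_extend_zero hf]
  exact hB _

end Submatrix

theorem eigCount_lt_le_one {V : Type*} [Fintype V] [DecidableEq V] (G : SimpleGraph V)
    [DecidableRel G.Adj] {c : ℝ} (w : V → ℝ)
    (hw : ∀ x, x ⬝ᵥ G.adjMatrix ℝ *ᵥ x ≤ c * (x ⬝ᵥ x) + (w ⬝ᵥ x) ^ 2) :
    eigCount G (c < ·) ≤ 1 := by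
  classical
  obtain rfl : ‹DecidableRel G.Adj› = fun _ _ => Classical.propDecidable _ := Subsingleton.elim _ _
  exact (adjMatrix_isHermitian G).card_lt_eigenvalues_le_one w hw

lemma Fin.sum_univ_eq_add_add_sum_two_le {M : Type*} [AddCommMonoid M] {s : ℕ} (hs : 2 ≤ s)
    (f : Fin s → M) :
    ∑ i, f i = f ⟨0, by omega⟩ + f ⟨1, by omega⟩ + ∑ j : {i : Fin s // 2 ≤ (i : ℕ)}, f j := by
  obtain ⟨m, rfl⟩ := Nat.exists_eq_add_of_le' hs
  simp only [Fin.sum_univ_succ, add_assoc]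
  congr 2
  refine Fintype.sum_bijective (fun i => ⟨i.succ.succ, by simp⟩) ⟨fun i j h => ?_, fun j => ?_⟩
    _ _ fun _ => rfl
  · simpa using h
  · exact ⟨⟨j.1 - 2, by omega⟩, by ext; simp; omega⟩

namespace F1Vert

def equivSum (s : ℕ) :
    F1Vert s ≃ Unit ⊕ Unit ⊕ Unit ⊕ Unit ⊕ Fin s ⊕ {i : Fin s // 2 ≤ (i : ℕ)} where
  toFun
    | .v1 => .inl ()
    | .v2 => .inr (.inl ())
    | .a1 => .inr (.inr (.inl ()))
    | .a2 => .inr (.inr (.inr (.inl ())))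
    | .u i => .inr (.inr (.inr (.inr (.inl i))))
    | .p j => .inr (.inr (.inr (.inr (.inr j))))
  invFun
    | .inl _ => .v1
    | .inr (.inl _) => .v2
    | .inr (.inr (.inl _)) => .a1
    | .inr (.inr (.inr (.inl _))) => .a2
    | .inr (.inr (.inr (.inr (.inl i)))) => .u i
    | .inr (.inr (.inr (.inr (.inr j)))) => .p j
  left_inv v := by cases v <;> rfl
  right_inv x := by rcases x with _ | _ | _ | _ | i | j <;> rfl

lemma sum_eq {M : Type*} [AddCommMonoid M] {s : ℕ} (hs : 2 ≤ s) (f : F1Vert s → M) :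
    ∑ v, f v = f v1 + f v2 + f a1 + f a2 + f (u ⟨0, by omega⟩) + f (u ⟨1, by omega⟩) +
      ∑ j : {i : Fin s // 2 ≤ (i : ℕ)}, (f (u j) + f (p j)) := by
  rw [← (equivSum s).symm.sum_comp]
  simp only [equivSum, Equiv.symm_mk, Equiv.coe_fn_mk, Fintype.sum_sum_type, univ_unique,
    PUnit.default_eq_unit, sum_const, card_singleton, one_smul,
    Fin.sum_univ_eq_add_add_sum_two_le hs, sum_add_distrib]
  abel

end F1Vert

namespace F1

open F1Vert

noncomputable def weight (s : ℕ) : F1Vert s → ℝ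
  | .u i => if 2 ≤ (i : ℕ) then 1 else 1 / 2
  | .p _ => 0
  | _ => 1 / 2

variable {s : ℕ}

lemma dotProduct_adjMatrix_mulVec_eq (hs : 2 ≤ s) [DecidableRel (F1 s).Adj] (y : F1Vert s → ℝ) :
    y ⬝ᵥ (F1 s).adjMatrix ℝ *ᵥ y =
      2 * (y v1 * (y a1 + y a2 + ∑ j : {i : Fin s // 2 ≤ (i : ℕ)}, y (u j)) +
        y v2 * (y (u ⟨0, by omega⟩) + y (u ⟨1, by omega⟩) +
          ∑ j : {i : Fin s // 2 ≤ (i : ℕ)}, y (u j)) +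
        y a1 * y (u ⟨0, by omega⟩) + y a2 * y (u ⟨1, by omega⟩) +
        ∑ j : {i : Fin s // 2 ≤ (i : ℕ)}, y (u j) * y (p j)) := by
  have h2 (j : {i : Fin s // 2 ≤ (i : ℕ)}) : 2 ≤ ((j : Fin s) : ℕ) := j.2
  have h0 (j : {i : Fin s // 2 ≤ (i : ℕ)}) : ((j : Fin s) : ℕ) ≠ 0 := by have := j.2; omega
  have h1 (j : {i : Fin s // 2 ≤ (i : ℕ)}) : ((j : Fin s) : ℕ) ≠ 1 := by have := j.2; omega
  have hval (j k : {i : Fin s // 2 ≤ (i : ℕ)}) : ((j : Fin s) : ℕ) = k ↔ j = k := by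
    rw [Fin.val_inj, Subtype.val_inj]
  rw [SimpleGraph.dotProduct_mulVec_adjMatrix]
  simp only [sum_eq hs]
  simp only [F1, SimpleGraph.irrefl, ↓reduceIte, SimpleGraph.fromRel_adj, ne_eq, reduceCtorEq,
    not_false_eq_true, F1Rel, or_self, and_false, add_zero, or_false, and_self, zero_add,
    nonpos_iff_eq_zero, OfNat.ofNat_ne_zero, Nat.not_ofNat_le_one, h2, or_true, one_ne_zero, h0,
    sum_const_zero, zero_ne_one, h1, u.injEq, Fin.ext_iff, (h0 · |>.symm), (h1 · |>.symm), hval,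
    true_and, sum_ite_eq, mem_univ, false_or, p.injEq, sum_ite_eq', sum_add_distrib]
  simp only [← mul_sum, ← sum_mul, mul_comm (y (p _))]
  ring

lemma dotProduct_self_eq (hs : 2 ≤ s) (y : F1Vert s → ℝ) :
    y ⬝ᵥ y = y v1 ^ 2 + y v2 ^ 2 + y a1 ^ 2 + y a2 ^ 2 + y (u ⟨0, by omega⟩) ^ 2 +
      y (u ⟨1, by omega⟩) ^ 2 + ∑ j : {i : Fin s // 2 ≤ (i : ℕ)}, (y (u j) ^ 2 + y (p j) ^ 2) := by
  simp [dotProduct, sum_eq hs, sq]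

lemma weight_dotProduct_eq (hs : 2 ≤ s) (y : F1Vert s → ℝ) :
    weight s ⬝ᵥ y = (y v1 + y v2 + y a1 + y a2 + y (u ⟨0, by omega⟩) + y (u ⟨1, by omega⟩)) / 2 +
      ∑ j : {i : Fin s // 2 ≤ (i : ℕ)}, y (u j) := by
  have h2 (j : {i : Fin s // 2 ≤ (i : ℕ)}) : 2 ≤ ((j : Fin s) : ℕ) := j.2
  simp only [dotProduct, weight, one_div, sum_eq hs, nonpos_iff_eq_zero, OfNat.ofNat_ne_zero,
    ↓reduceIte, Nat.not_ofNat_le_one, h2, one_mul, zero_mul, add_zero, add_left_inj]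
  ring

lemma dotProduct_adjMatrix_mulVec_le (hs : 2 ≤ s) [DecidableRel (F1 s).Adj] (y : F1Vert s → ℝ) :
    y ⬝ᵥ (F1 s).adjMatrix ℝ *ᵥ y ≤ 1 * (y ⬝ᵥ y) + (weight s ⬝ᵥ y) ^ 2 := by
  rw [one_mul, dotProduct_adjMatrix_mulVec_eq hs, dotProduct_self_eq hs, weight_dotProduct_eq hs]
  set U := ∑ j : {i : Fin s // 2 ≤ (i : ℕ)}, y (u j)
  have hpendant : ∑ j : {i : Fin s // 2 ≤ (i : ℕ)}, (y (u j) - y (p j)) ^ 2 +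
      2 * ∑ j : {i : Fin s // 2 ≤ (i : ℕ)}, y (u j) * y (p j) =
        ∑ j : {i : Fin s // 2 ≤ (i : ℕ)}, (y (u j) ^ 2 + y (p j) ^ 2) := by
    rw [mul_sum, ← sum_add_distrib]
    exact sum_congr rfl fun _ _ => by ring
  have hpendant_nonneg : 0 ≤ ∑ j : {i : Fin s // 2 ≤ (i : ℕ)}, (y (u j) - y (p j)) ^ 2 :=
    sum_nonneg fun _ _ => sq_nonneg _
  linear_combination hpendant + hpendant_nonneg +
    (1 / 2) * sq_nonneg (y v1 - y a1 - y a2 - U) +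
    (1 / 2) * sq_nonneg (y v2 - y (u ⟨0, by omega⟩) - y (u ⟨1, by omega⟩) - U) +
    (1 / 2) * sq_nonneg (y a1 - y a2 - y (u ⟨0, by omega⟩) + y (u ⟨1, by omega⟩)) +
    (1 / 4) * sq_nonneg (y v1 - y v2 - y a1 - y a2 + y (u ⟨0, by omega⟩) + y (u ⟨1, by omega⟩)) +
    (1 / 2) * sq_nonneg (y v1 + y v2)

end F1

/-- if a graph `G` is isomorphic to an induced subgraph of `F₁(s)` for some
integer `s ≥ 3`, then `λ₂(G) ≤ 1`, i.e. at most one eigenvalue of the adjacency matrix of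
`G` exceeds `1`. -/
theorem lambda2_le_one_of_embeds_into_F1 {V : Type*} [Fintype V] [DecidableEq V]
    (G : SimpleGraph V) (h : ∃ s : ℕ, 3 ≤ s ∧ Nonempty (G ↪g F1 s)) :
    eigCount G (fun t => 1 < t) ≤ 1 := by
  obtain ⟨s, hs, ⟨φ⟩⟩ := h
  classical
  refine eigCount_lt_le_one G (F1.weight s ∘ φ) fun x => ?_
  rw [← φ.submatrix_adjMatrix ℝ]
  exact dotProduct_submatrix_mulVec_le (F1.dotProduct_adjMatrix_mulVec_le (by omega)) φ.injective x
end

section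
/- Suppose G is a connected graph with λ₂(G) ≤ 1 which has neither K₅ nor K_{3,3} as a minor and whose girth equals 5, and let x₁x₂x₃x₄x₅x₁ be a 5-cycle in G. Then every vertex of G not lying on this 5-cycle is adjacent to exactly one vertex of the cycle. -/
/-- `HasMinor G H` : `H` is a minor of `G`, witnessed by a family of pairwise disjoint
nonempty branch sets, each inducing a connected subgraph of `G`, such that every edge of `H`
is realized by an edge of `G` between the corresponding branch sets. -/
def HasMinor {V : Type*} {W : Type*} (G : SimpleGraph V) (H : SimpleGraph W) : Prop :=
  ∃ B : W → Set V,
    (∀ w, (B w).Nonempty) ∧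
    (Pairwise fun w₁ w₂ => Disjoint (B w₁) (B w₂)) ∧
    (∀ w, (G.induce (B w)).Connected) ∧
    (∀ ⦃w₁ w₂⦄, H.Adj w₁ w₂ → ∃ a ∈ B w₁, ∃ b ∈ B w₂, G.Adj a b)

/-- `G` is planar in the sense of Wagner: it has neither `K₅` nor `K_{3,3}` as a minor. -/
def WagnerPlanar {V : Type*} (G : SimpleGraph V) : Prop :=
  ¬ HasMinor G (⊤ : SimpleGraph (Fin 5)) ∧
    ¬ HasMinor G (completeBipartiteGraph (Fin 3) (Fin 3))

/-!
Two neighbours of an outside vertex on the 5-cycle would close a cycle of length 3 or 4, so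
there is at most one. If some vertex had none, connectivity would give an edge `p₀p₁` where `p₀`
has no neighbour on the cycle and `p₁` has exactly one, say `x₀`. These seven vertices induce a
5-cycle with a pendant path of length two, and two test vectors, one supported on the path
`p₀p₁x₀` and one on the path `x₁x₂x₃x₄`, span a plane on which `A - 1` is positive definite,
`A` being the adjacency matrix. By the easy half of the Courant–Fischer principle, `A` then has two
eigenvalues greater than `1`.
-/

open Matrix Finset

theorem Matrix.card_le_card_pos_of_posDef_transpose_mul_diagonal_mul {n ι : Type*}
    [Fintype n] [DecidableEq n] [Fintype ι] {d : n → ℝ} {C : Matrix n ι ℝ}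
    (hC : (Cᵀ * diagonal d * C).PosDef) : Fintype.card ι ≤ #{i | 0 < d i} := by
  by_contra! hlt
  let restrict : (ι → ℝ) →ₗ[ℝ] {i // 0 < d i} → ℝ := (C.submatrix Subtype.val id).mulVecLin
  have hker : LinearMap.ker restrict ≠ ⊥ := LinearMap.ker_ne_bot_of_finrank_lt <| by
    simpa [Fintype.card_subtype] using hlt
  obtain ⟨a, ha, ha0⟩ := (Submodule.ne_bot_iff _).mp hker
  have hvanish : ∀ i, 0 < d i → (C *ᵥ a) i = 0 := fun i hi =>
    congrFun (LinearMap.mem_ker.mp ha) ⟨i, hi⟩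
  have hquad : star a ⬝ᵥ (Cᵀ * diagonal d * C) *ᵥ a = ∑ i, d i * (C *ᵥ a) i ^ 2 := by
    rw [star_trivial, ← mulVec_mulVec, ← mulVec_mulVec, dotProduct_mulVec, vecMul_transpose]
    simp only [dotProduct, mulVec_diagonal]
    exact sum_congr rfl fun i _ => by ring
  have hnonpos : ∑ i, d i * (C *ᵥ a) i ^ 2 ≤ 0 := by
    refine sum_nonpos fun i _ => ?_
    rcases lt_or_ge 0 (d i) with hi | hi
    · simp [hvanish i hi]
    · exact mul_nonpos_of_nonpos_of_nonneg hi (sq_nonneg _)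
  exact (hC.dotProduct_mulVec_pos ha0).not_ge (hquad ▸ hnonpos)

theorem Matrix.IsHermitian.card_le_card_eigenvalues_gt {n ι : Type*}
    [Fintype n] [DecidableEq n] [Fintype ι] {A : Matrix n n ℝ} (hA : A.IsHermitian) {c : ℝ}
    {B : Matrix n ι ℝ} (hB : (Bᵀ * (A - c • 1) * B).PosDef) :
    Fintype.card ι ≤ #{i | c < hA.eigenvalues i} := by
  set U : Matrix n n ℝ := (hA.eigenvectorUnitary : Matrix n n ℝ)
  have hUU : U * Uᵀ = 1 := by
    have := mem_unitaryGroup_iff.mp hA.eigenvectorUnitary.2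
    rwa [star_eq_conjTranspose, conjTranspose_eq_transpose_of_trivial] at this
  have hdiag : Uᵀ * (A - c • 1) * U = diagonal fun i => hA.eigenvalues i - c := by
    have hUU' := mem_unitaryGroup_iff'.mp hA.eigenvectorUnitary.2
    have hspec := hA.conjStarAlgAut_star_eigenvectorUnitary
    simp only [Unitary.conjStarAlgAut_star_apply, star_eq_conjTranspose,
      conjTranspose_eq_transpose_of_trivial] at hspec hUU'
    rw [Matrix.mul_sub, Matrix.sub_mul, hspec, Matrix.mul_smul, Matrix.smul_mul, Matrix.mul_one,
      hUU', smul_one_eq_diagonal, diagonal_sub, RCLike.ofReal_real_eq_id, Function.id_comp]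
  have hconj : Bᵀ * (A - c • 1) * B =
      (Uᵀ * B)ᵀ * diagonal (fun i => hA.eigenvalues i - c) * (Uᵀ * B) := by
    rw [← hdiag, transpose_mul, transpose_transpose]
    simp only [Matrix.mul_assoc]
    rw [← Matrix.mul_assoc U, hUU, Matrix.one_mul]
    simp only [← Matrix.mul_assoc, hUU, Matrix.one_mul]
  calc Fintype.card ι ≤ #{i | 0 < hA.eigenvalues i - c} :=
        card_le_card_pos_of_posDef_transpose_mul_diagonal_mul (hconj ▸ hB)
    _ = #{i | c < hA.eigenvalues i} := by simp_rw [sub_pos]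

theorem Matrix.transpose_mul_mul_one_submatrix_mul {n ι κ R : Type*} [Fintype n] [Fintype ι]
    [DecidableEq n] [CommSemiring R] (A : Matrix n n R) (f : ι → n) (C : Matrix ι κ R) :
    ((1 : Matrix n n R).submatrix id f * C)ᵀ * A * ((1 : Matrix n n R).submatrix id f * C) =
      Cᵀ * A.submatrix f f * C := by
  have hright : A * (1 : Matrix n n R).submatrix id f = A.submatrix id f :=
    mul_submatrix_one (Equiv.refl n) f A
  have hleft : (1 : Matrix n n R).submatrix f id * A.submatrix id f = A.submatrix f f :=
    one_submatrix_mul f (Equiv.refl n) _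
  rw [transpose_mul, transpose_submatrix, transpose_one, Matrix.mul_assoc, Matrix.mul_assoc,
    ← Matrix.mul_assoc A, hright, ← Matrix.mul_assoc _ (A.submatrix id f), hleft, Matrix.mul_assoc]

theorem Matrix.posDef_fin_two {a b d : ℝ} (ha : 0 < a) (hdet : b ^ 2 < a * d) :
    (!![a, b; b, d] : Matrix (Fin 2) (Fin 2) ℝ).PosDef := by
  refine .of_dotProduct_mulVec_pos (by ext i j; fin_cases i <;> fin_cases j <;> rfl) fun x hx => ?_
  have hsq : 0 < (a * x 0 + b * x 1) ^ 2 + (a * d - b ^ 2) * x 1 ^ 2 := by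
    rcases eq_or_ne (x 1) 0 with h1 | h1
    · have h0 : x 0 ≠ 0 := fun h0 => hx (funext fun i => by fin_cases i <;> simp [h0, h1])
      simpa [h1] using sq_pos_of_ne_zero (mul_ne_zero ha.ne' h0)
    · have := sq_pos_of_ne_zero h1
      nlinarith [sq_nonneg (a * x 0 + b * x 1)]
  have hq : star x ⬝ᵥ !![a, b; b, d] *ᵥ x =
      ((a * x 0 + b * x 1) ^ 2 + (a * d - b ^ 2) * x 1 ^ 2) / a := by
    rw [eq_div_iff ha.ne']
    simp only [dotProduct, Pi.star_apply, star_trivial, mulVec, of_apply, cons_val',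
      cons_val_fin_one, Fin.sum_univ_two, cons_val_zero, cons_val_one]
    ring
  rw [hq]; positivity

namespace SimpleGraph
variable {V : Type*} {G : SimpleGraph V}

lemma egirth_le_three {a b c : V} (hab : G.Adj a b) (hbc : G.Adj b c) (hca : G.Adj c a) :
    G.egirth ≤ 3 := by
  have hw : (Walk.cons hab (Walk.cons hbc (Walk.cons hca Walk.nil))).IsCycle := by
    simp [Walk.isCycle_def, Walk.isTrail_def, hab.ne, hbc.ne, hca.ne, hab.ne', hca.ne']
  exact egirth_le_length hw

lemma egirth_le_four {a b c d : V} (hac : a ≠ c) (hbd : b ≠ d) (hab : G.Adj a b)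
    (hbc : G.Adj b c) (hcd : G.Adj c d) (hda : G.Adj d a) : G.egirth ≤ 4 := by
  have hw : (Walk.cons hab (Walk.cons hbc (Walk.cons hcd (Walk.cons hda Walk.nil)))).IsCycle := by
    simp [Walk.isCycle_def, Walk.isTrail_def, hab.ne, hbc.ne, hcd.ne, hda.ne, hab.ne', hda.ne',
      hac, hbd, hac.symm]
  exact egirth_le_length hw

lemma adj_iff_of_five_le_egirth (h5 : 5 ≤ G.egirth) {x : Fin 5 → V}
    (hcyc : ∀ i, G.Adj (x i) (x (i + 1))) {i j : Fin 5} :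
    G.Adj (x i) (x j) ↔ j = i + 1 ∨ i = j + 1 := by
  refine ⟨fun h => ?_, by rintro (rfl | rfl); exacts [hcyc i, (hcyc j).symm]⟩
  have hstep (k : Fin 5) : G.Adj (x (i + k)) (x (i + (k + 1))) := add_assoc i k 1 ▸ hcyc (i + k)
  have hno3 : ¬ G.egirth ≤ 3 := fun h3 => by have := h5.trans h3; norm_num at this
  obtain ⟨d, rfl⟩ : ∃ d, j = i + d := ⟨j - i, by abel⟩
  fin_cases d
  · simp at h
  · simp
  · exact absurd (egirth_le_three (by simpa using hstep 0) (hstep 1) (by simpa using h.symm)) hno3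
  · exact absurd (egirth_le_three (hstep 3) (by simpa using hstep 4) (by simpa using h)) hno3
  · simp [add_assoc]

lemma eq_of_adj_of_adj_of_five_le_egirth (h5 : 5 ≤ G.egirth) {x : Fin 5 → V}
    (hinj : Function.Injective x) (hcyc : ∀ i, G.Adj (x i) (x (i + 1))) {v : V}
    (hv : v ∉ Set.range x) {i j : Fin 5} (hi : G.Adj v (x i)) (hj : G.Adj v (x j)) : i = j := by
  have hstep (k : Fin 5) : G.Adj (x (i + k)) (x (i + (k + 1))) := add_assoc i k 1 ▸ hcyc (i + k)
  have hno3 : ¬ G.egirth ≤ 3 := fun h3 => by have := h5.trans h3; norm_num at this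
  have hno4 : ¬ G.egirth ≤ 4 := fun h4 => by have := h5.trans h4; norm_num at this
  have hvx (k : Fin 5) : v ≠ x (i + k) := fun h => hv ⟨i + k, h.symm⟩
  have hxx {k l : Fin 5} (hkl : k ≠ l) : x (i + k) ≠ x (i + l) := hinj.ne (by simpa using hkl)
  obtain ⟨d, rfl⟩ : ∃ d, j = i + d := ⟨j - i, by abel⟩
  fin_cases d
  · simp
  · exact absurd (egirth_le_three (by simpa using hi) (hstep 0) (by simpa using hj.symm)) hno3
  · exact absurd (egirth_le_four (hvx 1) (hxx (by decide : (0 : Fin 5) ≠ 2)) (by simpa using hi)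
      (hstep 0) (hstep 1) (by simpa using hj.symm)) hno4
  · exact absurd (egirth_le_four (hvx 4) (hxx (by decide : (3 : Fin 5) ≠ 0)) (by simpa using hj)
      (hstep 3) (by simpa using hstep 4) (by simpa using hi.symm)) hno4
  · exact absurd (egirth_le_three (by simpa using hj) (by simpa using hstep 4)
      (by simpa using hi.symm)) hno3

lemma card_le_eigCount_of_posDef [Fintype V] [DecidableEq V] [DecidableRel G.Adj] {ι : Type*}
    [Fintype ι] {c : ℝ} {B : Matrix V ι ℝ} (hB : (Bᵀ * (G.adjMatrix ℝ - c • 1) * B).PosDef) :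
    Fintype.card ι ≤ eigCount G (c < ·) := by
  unfold eigCount
  convert (adjMatrix_isHermitian G).card_le_card_eigenvalues_gt hB

lemma two_le_eigCount_of_pendant_path [Fintype V] [DecidableEq V] (h5 : 5 ≤ G.egirth)
    {x : Fin 5 → V} (hinj : Function.Injective x) (hcyc : ∀ i, G.Adj (x i) (x (i + 1)))
    {p₀ p₁ : V} (h₁ : G.Adj p₁ (x 0)) (h₀₁ : G.Adj p₀ p₁) (hfar : ∀ j, ¬ G.Adj p₀ (x j)) :
    2 ≤ eigCount G (1 < ·) := by
  classical
  have hp₁ : p₁ ∉ Set.range x := by rintro ⟨j, rfl⟩; exact hfar j h₀₁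
  have hp₀ : p₀ ∉ Set.range x := by rintro ⟨j, rfl⟩; exact hfar (j + 1) (hcyc j)
  have hp₁x (j : Fin 5) : G.Adj p₁ (x j) ↔ j = 0 :=
    ⟨fun h => eq_of_adj_of_adj_of_five_le_egirth h5 hinj hcyc hp₁ h h₁, by rintro rfl; exact h₁⟩
  have hxp₁ (j : Fin 5) : G.Adj (x j) p₁ ↔ j = 0 := G.adj_comm _ _ |>.trans (hp₁x j)
  have hxp₀ (j : Fin 5) : ¬ G.Adj (x j) p₀ := fun h => hfar j h.symm
  let f : Fin 7 → V := ![p₀, p₁, x 0, x 1, x 2, x 3, x 4]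
  have hf : Function.Injective f := by
    have hcons : f = Fin.cons p₀ (Fin.cons p₁ x) := by ext i; fin_cases i <;> rfl
    rw [hcons]
    refine Fin.cons_injective_of_injective ?_ (Fin.cons_injective_of_injective hp₁ hinj)
    rw [Fin.range_cons]
    exact fun h => h.elim h₀₁.ne hp₀
  have hsub : (G.adjMatrix ℝ).submatrix f f =
      !![0, 1, 0, 0, 0, 0, 0;
         1, 0, 1, 0, 0, 0, 0;
         0, 1, 0, 1, 0, 0, 1;
         0, 0, 1, 0, 1, 0, 0;
         0, 0, 0, 1, 0, 1, 0;
         0, 0, 0, 0, 1, 0, 1;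
         0, 0, 1, 0, 0, 1, 0] := by
    ext i j
    fin_cases i <;> fin_cases j <;>
      simp [f, adjMatrix_apply, adj_iff_of_five_le_egirth h5 hcyc, hp₁x, hxp₁, hfar, hxp₀, h₀₁,
        h₀₁.symm]
  -- Integer approximations of the Perron vectors `(1, √2, 1)` of the path `p₀p₁x₀` and
  -- `(1, φ, φ, 1)` of the path `x₁x₂x₃x₄`, whose largest eigenvalues `√2` and `φ` exceed `1`.
  let C : Matrix (Fin 7) (Fin 2) ℝ := !![2, 0; 3, 0; 2, 0; 0, 2; 0, 3; 0, 3; 0, 2]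
  have hgram : Cᵀ * ((G.adjMatrix ℝ - (1 : ℝ) • 1).submatrix f f) * C = !![7, 8; 8, 16] := by
    have hshift : (G.adjMatrix ℝ - (1 : ℝ) • 1).submatrix f f =
        (G.adjMatrix ℝ).submatrix f f - 1 := by
      rw [one_smul, ← submatrix_one f hf]; rfl
    rw [hshift, hsub]
    ext i j
    fin_cases i <;> fin_cases j <;>
      simp [C, Matrix.mul_apply, Fin.sum_univ_succ, Matrix.one_apply] <;> norm_num
  have hpos : (Cᵀ * ((G.adjMatrix ℝ - (1 : ℝ) • 1).submatrix f f) * C).PosDef :=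
    hgram ▸ posDef_fin_two (by norm_num) (by norm_num)
  have := card_le_eigCount_of_posDef (transpose_mul_mul_one_submatrix_mul _ f C ▸ hpos)
  rwa [Fintype.card_fin] at this

end SimpleGraph

theorem girth_five_outside_vertex_unique_nbr_general {V : Type*} [Fintype V] [DecidableEq V]
    (G : SimpleGraph V) (hconn : G.Connected) (hl : eigCount G (fun t => 1 < t) ≤ 1)
    (hgirth : G.egirth = 5)
    (x : Fin 5 → V) (hinj : Function.Injective x) (hcyc : ∀ i, G.Adj (x i) (x (i + 1))) :
    ∀ v : V, v ∉ Set.range x → ∃! i : Fin 5, G.Adj v (x i) := by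
  have h5 : 5 ≤ G.egirth := hgirth.ge
  intro v hv
  obtain ⟨i, hi⟩ : ∃ i, G.Adj v (x i) := by
    by_contra! hfar
    obtain ⟨d, -, hd₀, hd₁⟩ := (hconn.preconnected v (x 0)).some.exists_boundary_dart
      {u | ∀ j, ¬ G.Adj u (x j)} hfar fun h => h 1 (hcyc 0)
    obtain ⟨j, hj⟩ : ∃ j, G.Adj d.snd (x j) := by simpa using hd₁
    have := G.two_le_eigCount_of_pendant_path h5 (hinj.comp (add_right_injective j))
      (fun k => by simpa [add_assoc] using hcyc (j + k)) (by simpa using hj) d.adj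
      fun k => hd₀ (j + k)
    omega
  exact ⟨i, hi, fun j hj => G.eq_of_adj_of_adj_of_five_le_egirth h5 hinj hcyc hv hj hi⟩

/-- if `G` is connected with `λ₂(G) ≤ 1`, has neither `K₅` nor `K_{3,3}` as a
minor, has girth `5`, and `x₀x₁x₂x₃x₄x₀` is a 5-cycle in `G`, then every vertex of `G` not
lying on the cycle is adjacent to exactly one vertex of the cycle. -/
theorem girth_five_outside_vertex_unique_nbr {V : Type*} [Fintype V] [DecidableEq V]
    (G : SimpleGraph V) (hconn : G.Connected) (hl : eigCount G (fun t => 1 < t) ≤ 1)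
    (hplanar : WagnerPlanar G) (hgirth : G.egirth = 5)
    (x : Fin 5 → V) (hinj : Function.Injective x) (hcyc : ∀ i, G.Adj (x i) (x (i + 1))) :
    ∀ v : V, v ∉ Set.range x → ∃! i : Fin 5, G.Adj v (x i) :=
  girth_five_outside_vertex_unique_nbr_general G hconn hl hgirth x hinj hcyc
end

section
/- Suppose G is a connected graph with λ₂(G) ≤ 1 which has neither K₅ nor K_{3,3} as a minor and whose girth equals 5, and let x₁x₂x₃x₄x₅x₁ be a 5-cycle in G. Then for each i ∈ {1,…,5}, there is at most one vertex v outside the cycle whose neighborhood on the cycle is exactly {x_i}; that is, |T_{x_i}| ≤ 1 where T_{x_i} = {v ∉ {x₁,…,x₅} : N(v) ∩ {x₁,…,x₅} = {x_i}}. -/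
open Matrix Function Finset

namespace Matrix

section ExtendByZero

variable {R W n : Type*} [Fintype W] [Fintype n] [CommSemiring R] {f : W → n}

lemma extend_dotProduct (hf : Injective f) (c : W → R) (g : n → R) :
    extend f c 0 ⬝ᵥ g = c ⬝ᵥ (g ∘ f) :=
  (Fintype.sum_of_injective f hf _ _
    (fun v hv => by simp [extend_apply' _ _ _ (by simpa using hv)])
    fun w => by simp [hf.extend_apply]).symm

lemma extend_dotProduct_extend (hf : Injective f) (c c' : W → R) :
    extend f c 0 ⬝ᵥ extend f c' 0 = c ⬝ᵥ c' := by
  rw [extend_dotProduct hf, extend_comp hf]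

lemma extend_dotProduct_mulVec_extend (hf : Injective f) (M : Matrix n n R) (c c' : W → R) :
    extend f c 0 ⬝ᵥ M *ᵥ extend f c' 0 = c ⬝ᵥ M.submatrix f f *ᵥ c' := by
  rw [extend_dotProduct hf]
  congr 1
  ext w
  rw [Function.comp_apply, mulVec, dotProduct_comm, extend_dotProduct hf, mulVec, dotProduct_comm]
  rfl

end ExtendByZero

lemma _root_.OrthonormalBasis.sum_dotProduct_mul_dotProduct {n ι : Type*} [Fintype n]
    [Fintype ι] (b : OrthonormalBasis ι ℝ (EuclideanSpace ℝ n)) (x y : n → ℝ) :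
    ∑ i, (b i ⬝ᵥ x) * (b i ⬝ᵥ y) = x ⬝ᵥ y := by
  have := b.sum_inner_mul_inner (WithLp.toLp 2 x) (WithLp.toLp 2 y)
  simp only [EuclideanSpace.inner_eq_star_dotProduct, star_trivial] at this
  simpa only [dotProduct_comm] using this

namespace IsHermitian

variable {n : Type*} [Fintype n] [DecidableEq n] {A : Matrix n n ℝ}

lemma eigenvectorBasis_dotProduct_mulVec (hA : A.IsHermitian) (i : n) (w : n → ℝ) :
    hA.eigenvectorBasis i ⬝ᵥ A *ᵥ w = hA.eigenvalues i * (hA.eigenvectorBasis i ⬝ᵥ w) := by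
  have hAT : Aᵀ = A := by simpa [IsHermitian, conjTranspose_eq_transpose_of_trivial] using hA
  rw [dotProduct_mulVec, ← mulVec_transpose, hAT, hA.mulVec_eigenvectorBasis, smul_dotProduct,
    smul_eq_mul]

lemma dotProduct_mulVec_self_eq_sum (hA : A.IsHermitian) (w : n → ℝ) :
    w ⬝ᵥ A *ᵥ w = ∑ i, hA.eigenvalues i * (hA.eigenvectorBasis i ⬝ᵥ w) ^ 2 := by
  rw [← hA.eigenvectorBasis.sum_dotProduct_mul_dotProduct]
  congr! 1 with i
  rw [hA.eigenvectorBasis_dotProduct_mulVec]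
  ring

variable {E : Type*} [AddCommGroup E] [Module ℝ E] [FiniteDimensional ℝ E] {t : ℝ}

/-- Some `L c ≠ 0` is orthogonal to all eigenvectors with eigenvalue `> t` as soon as there are
fewer of them than `finrank E`; there the quadratic form is at most `t` times the squared norm. -/
theorem finrank_le_card_lt_eigenvalues (hA : A.IsHermitian) (L : E →ₗ[ℝ] n → ℝ)
    (hL : ∀ c ≠ 0, t * (L c ⬝ᵥ L c) < L c ⬝ᵥ A *ᵥ L c) :
    Module.finrank ℝ E ≤ #{i | t < hA.eigenvalues i} := by
  set S : Finset n := {i | t < hA.eigenvalues i}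
  by_contra! hS
  let P : Matrix S n ℝ := fun i => hA.eigenvectorBasis i
  have hker : LinearMap.ker (P.mulVecLin ∘ₗ L) ≠ ⊥ :=
    LinearMap.ker_ne_bot_of_finrank_lt (by simpa using hS)
  obtain ⟨c, hc, hc0⟩ := Submodule.exists_mem_ne_zero_of_ne_bot hker
  have horth : ∀ i ∈ S, hA.eigenvectorBasis i ⬝ᵥ L c = 0 := fun i hi =>
    congrFun (LinearMap.mem_ker.mp hc) ⟨i, hi⟩
  refine (hL c hc0).not_ge ?_
  rw [hA.dotProduct_mulVec_self_eq_sum, ← hA.eigenvectorBasis.sum_dotProduct_mul_dotProduct,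
    Finset.mul_sum]
  refine Finset.sum_le_sum fun i _ => ?_
  by_cases hi : i ∈ S
  · simp [horth i hi]
  · have : hA.eigenvalues i ≤ t := by simpa [S] using hi
    nlinarith [sq_nonneg (hA.eigenvectorBasis i ⬝ᵥ L c)]

theorem finrank_le_card_lt_eigenvalues_of_submatrix (hA : A.IsHermitian) {W : Type*}
    [Fintype W] {f : W → n} (hf : Injective f) (L : E →ₗ[ℝ] W → ℝ)
    (hL : ∀ c ≠ 0, t * (L c ⬝ᵥ L c) < L c ⬝ᵥ A.submatrix f f *ᵥ L c) :
    Module.finrank ℝ E ≤ #{i | t < hA.eigenvalues i} :=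
  hA.finrank_le_card_lt_eigenvalues ((ExtendByZero.linearMap ℝ f).comp L) fun c hc => by
    change t * (extend f (L c) 0 ⬝ᵥ extend f (L c) 0) <
      extend f (L c) 0 ⬝ᵥ A *ᵥ extend f (L c) 0
    rw [extend_dotProduct_extend hf, extend_dotProduct_mulVec_extend hf]
    exact hL c hc

end IsHermitian

end Matrix

namespace SimpleGraph

variable {V : Type*} {G : SimpleGraph V}

theorem finrank_le_card_lt_eigenvalues_of_embedding [Fintype V] [DecidableEq V]
    [DecidableRel G.Adj] {W : Type*} [Fintype W] {H : SimpleGraph W} [DecidableRel H.Adj]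
    (φ : H ↪g G) {E : Type*} [AddCommGroup E] [Module ℝ E] [FiniteDimensional ℝ E]
    (L : E →ₗ[ℝ] W → ℝ) {t : ℝ}
    (hL : ∀ c ≠ 0, t * (L c ⬝ᵥ L c) < L c ⬝ᵥ H.adjMatrix ℝ *ᵥ L c) :
    Module.finrank ℝ E ≤ #{i | t < (adjMatrix_isHermitian G).eigenvalues i} :=
  (adjMatrix_isHermitian G).finrank_le_card_lt_eigenvalues_of_submatrix φ.injective L <| by
    rwa [Embedding.submatrix_adjMatrix]

lemma cliqueFree_three_of_three_lt_egirth (h : 3 < G.egirth) : G.CliqueFree 3 := by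
  by_contra hG
  have := ((not_cliqueFree_iff_top_isContained 3).mp hG).egirth_le
  rw [egirth_top (by simp)] at this
  exact this.not_gt h

lemma CliqueFree.not_adj_of_adj_of_adj (hG : G.CliqueFree 3) {a b c : V} (hab : G.Adj a b)
    (hbc : G.Adj b c) : ¬G.Adj a c := fun hac => by
  classical exact hG {a, b, c} (is3Clique_triple_iff.mpr ⟨hab, hac, hbc⟩)

lemma CliqueFree.adj_iff_of_cycle_five (hG : G.CliqueFree 3) {x : Fin 5 → V}
    (hx : ∀ i, G.Adj (x i) (x (i + 1))) (a b : Fin 5) :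
    G.Adj (x a) (x b) ↔ b = a + 1 ∨ a = b + 1 := by
  refine ⟨fun h => ?_, by rintro (rfl | rfl); exacts [hx a, (hx b).symm]⟩
  have hx2 : ∀ i, ¬G.Adj (x i) (x (i + 2)) := fun i =>
    hG.not_adj_of_adj_of_adj (hx i) (by simpa [add_assoc, one_add_one_eq_two] using hx (i + 1))
  have hab : a ≠ b := fun hab => h.ne (congrArg x hab)
  have hdist : ∀ a b : Fin 5, a ≠ b → b = a + 1 ∨ a = b + 1 ∨ b = a + 2 ∨ a = b + 2 := by
    decide
  rcases hdist a b hab with h' | h' | rfl | rfl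
  · exact .inl h'
  · exact .inr h'
  · exact (hx2 a h).elim
  · exact (hx2 b h.symm).elim

def cycleFiveTwoPendants : SimpleGraph (Fin 5 ⊕ Fin 2) where
  Adj
    | .inl a, .inl b => b = a + 1 ∨ a = b + 1
    | .inl a, .inr _ => a = 0
    | .inr _, .inl b => b = 0
    | .inr _, .inr _ => False
  symm := ⟨by rintro (a | a) (b | b) <;> simp only <;> tauto⟩
  loopless := ⟨by rintro (a | a) <;> simp only <;> decide +revert⟩

instance : DecidableRel cycleFiveTwoPendants.Adj
  | .inl a, .inl b => inferInstanceAs (Decidable (b = a + 1 ∨ a = b + 1))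
  | .inl a, .inr _ => inferInstanceAs (Decidable (a = 0))
  | .inr _, .inl b => inferInstanceAs (Decidable (b = 0))
  | .inr _, .inr _ => inferInstanceAs (Decidable False)

def cycleFiveTwoPendantsTestVectors : Matrix (Fin 2) (Fin 5 ⊕ Fin 2) ℝ :=
  ![Sum.elim ![1, 0, 0, 0, 0] ![1, 1], Sum.elim ![0, 1, 2, 2, 1] ![0, 0]]

lemma cycleFiveTwoPendants_quadForm_sub_dotProduct_self (c : Fin 2 → ℝ) :
    let w := c ᵥ* cycleFiveTwoPendantsTestVectors
    w ⬝ᵥ cycleFiveTwoPendants.adjMatrix ℝ *ᵥ w - w ⬝ᵥ w =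
      (c 0 + 2 * c 1) ^ 2 + 2 * c 1 ^ 2 := by
  simp only [dotProduct, mulVec, vecMul, adjMatrix_apply, Fintype.sum_sum_type,
    Fin.sum_univ_five, Fin.sum_univ_two]
  simp [cycleFiveTwoPendantsTestVectors, cycleFiveTwoPendants]
  ring

lemma cycleFiveTwoPendants_dotProduct_lt (c : Fin 2 → ℝ) (hc : c ≠ 0) :
    let w := c ᵥ* cycleFiveTwoPendantsTestVectors
    1 * (w ⬝ᵥ w) < w ⬝ᵥ cycleFiveTwoPendants.adjMatrix ℝ *ᵥ w := by
  have hpos : 0 < (c 0 + 2 * c 1) ^ 2 + 2 * c 1 ^ 2 := by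
    by_cases h1 : c 1 = 0
    · have h0 : c 0 ≠ 0 := fun h0 => hc (funext fun j => by fin_cases j <;> simp [h0, h1])
      simpa [h1] using sq_pos_of_ne_zero h0
    · positivity
  have := cycleFiveTwoPendants_quadForm_sub_dotProduct_self c
  simp only at this ⊢
  linarith

lemma CliqueFree.exists_embedding_cycleFiveTwoPendants (hG : G.CliqueFree 3) {x : Fin 5 → V}
    (hinj : Injective x) (hx : ∀ i, G.Adj (x i) (x (i + 1))) {i : Fin 5} {u v : V}
    (hu : u ∉ Set.range x) (hui : ∀ j, G.Adj u (x j) ↔ j = i)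
    (hv : v ∉ Set.range x) (hvi : ∀ j, G.Adj v (x j) ↔ j = i) (huv : u ≠ v) :
    Nonempty (cycleFiveTwoPendants ↪g G) := by
  let y : Fin 5 → V := fun j => x (j + i)
  have hy : ∀ j, G.Adj (y j) (y (j + 1)) := fun j => by
    simpa [y, add_right_comm] using hx (j + i)
  have hp : ∀ (s : Fin 2) j, G.Adj (![u, v] s) (y j) ↔ j = 0 := by
    intro s j
    fin_cases s <;> simp [y, hui, hvi]
  have hpp : ∀ s t : Fin 2, ¬G.Adj (![u, v] s) (![u, v] t) := fun s t h =>
    hG.not_adj_of_adj_of_adj h ((hp t 0).mpr rfl) ((hp s 0).mpr rfl)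
  refine ⟨⟨⟨Sum.elim y ![u, v], ?_⟩, ?_⟩⟩
  · refine (hinj.comp (add_left_injective i)).sumElim ?_ ?_
    · intro s t hst
      fin_cases s <;> fin_cases t <;> simp_all [eq_comm]
    · intro j s hjs
      fin_cases s
      exacts [hu ⟨_, hjs⟩, hv ⟨_, hjs⟩]
  · rintro (a | s) (b | t)
    · exact hG.adj_iff_of_cycle_five hy a b
    · exact G.adj_comm _ _ |>.trans (hp t a)
    · exact hp s b
    · exact iff_of_false (hpp s t) id

end SimpleGraph

theorem girth_five_T_single_subsingleton_general {V : Type*} [Fintype V] [DecidableEq V]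
    (G : SimpleGraph V) (hl : eigCount G (fun t => 1 < t) ≤ 1)
    (hgirth : G.egirth = 5)
    (x : Fin 5 → V) (hinj : Function.Injective x) (hcyc : ∀ i, G.Adj (x i) (x (i + 1))) :
    ∀ i : Fin 5, ∀ u v : V,
      u ∉ Set.range x → (∀ j, G.Adj u (x j) ↔ j = i) →
      v ∉ Set.range x → (∀ j, G.Adj v (x j) ↔ j = i) → u = v := by
  classical
  intro i u v hu hui hv hvi
  by_contra huv
  have hG : G.CliqueFree 3 :=
    SimpleGraph.cliqueFree_three_of_three_lt_egirth (by rw [hgirth]; norm_num)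
  obtain ⟨φ⟩ := hG.exists_embedding_cycleFiveTwoPendants hinj hcyc hu hui hv hvi huv
  have h2 := SimpleGraph.finrank_le_card_lt_eigenvalues_of_embedding φ
    SimpleGraph.cycleFiveTwoPendantsTestVectors.vecMulLinear
    SimpleGraph.cycleFiveTwoPendants_dotProduct_lt
  rw [Module.finrank_fin_fun] at h2
  unfold eigCount at hl
  exact absurd (h2.trans hl) (by norm_num)

/-- under the girth-5 setting with 5-cycle `x₀x₁x₂x₃x₄x₀`, for each `i` there
is at most one vertex outside the cycle whose neighborhood on the cycle is exactly `{x i}`,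
i.e. `|T_{x_i}| ≤ 1`. -/
theorem girth_five_T_single_subsingleton {V : Type*} [Fintype V] [DecidableEq V]
    (G : SimpleGraph V) (hconn : G.Connected) (hl : eigCount G (fun t => 1 < t) ≤ 1)
    (hplanar : WagnerPlanar G) (hgirth : G.egirth = 5)
    (x : Fin 5 → V) (hinj : Function.Injective x) (hcyc : ∀ i, G.Adj (x i) (x (i + 1))) :
    ∀ i : Fin 5, ∀ u v : V,
      u ∉ Set.range x → (∀ j, G.Adj u (x j) ↔ j = i) →
      v ∉ Set.range x → (∀ j, G.Adj v (x j) ↔ j = i) → u = v :=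
  girth_five_T_single_subsingleton_general G hl hgirth x hinj hcyc
end

section
/- Suppose G is a connected graph with λ₂(G) ≤ 1 which has neither K₅ nor K_{3,3} as a minor and whose girth equals 5, and let x₁x₂x₃x₄x₅x₁ be a 5-cycle in G. If u and v are distinct vertices outside the cycle with N(u) ∩ {x₁,…,x₅} = {x_i} and N(v) ∩ {x₁,…,x₅} = {x_j} for some i ≠ j, then u is adjacent to v if and only if x_i and x_j are non-adjacent (i.e., u ≁ v when x_i ∼ x_j, and u ∼ v when x_i ≁ x_j). -/
open Finset Matrix

theorem Finset.sum_mul_sq_nonpos_of_forall_ne {ι : Type*} [Fintype ι] (d e : ι → ℝ) (k₀ : ι)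
    (hd : ∀ k ≠ k₀, d k ≤ 0) (he : e k₀ = 0) : ∑ k, d k * e k ^ 2 ≤ 0 := by
  refine sum_nonpos fun k _ => ?_
  rcases eq_or_ne k k₀ with rfl | hk
  · simp [he]
  · exact mul_nonpos_of_nonpos_of_nonneg (hd k hk) (sq_nonneg _)

theorem Finset.sum_mul_sq_nonpos_of_sum_mul_mul_eq_zero {ι : Type*} [Fintype ι] {d a b : ι → ℝ}
    (hd : #{k | 0 < d k} ≤ 1) (ha : 0 < ∑ k, d k * a k ^ 2) (hab : ∑ k, d k * a k * b k = 0) :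
    ∑ k, d k * b k ^ 2 ≤ 0 := by
  obtain ⟨k₀, hk₀⟩ : ∃ k₀, 0 < d k₀ := by
    by_contra! h
    exact ha.not_ge (sum_nonpos fun k _ => mul_nonpos_of_nonpos_of_nonneg (h k) (sq_nonneg _))
  have hd₀ : ∀ k ≠ k₀, d k ≤ 0 := fun k hk => by
    by_contra! h
    exact hk (card_le_one.mp hd k (by simp [h]) k₀ (by simp [hk₀]))
  have ha₀ : a k₀ ≠ 0 := fun h => ha.not_ge (sum_mul_sq_nonpos_of_forall_ne d a k₀ hd₀ h)
  -- `b - t • a` vanishes at the only index where `d` is positive.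
  set t := b k₀ / a k₀
  have hrest := sum_mul_sq_nonpos_of_forall_ne d (fun k => b k - t * a k) k₀ hd₀
    (by simp [t, ha₀])
  have expand : ∑ k, d k * (b k - t * a k) ^ 2 =
      ∑ k, d k * b k ^ 2 - 2 * t * ∑ k, d k * a k * b k + t ^ 2 * ∑ k, d k * a k ^ 2 := by
    simp only [mul_sum, ← sum_sub_distrib, ← sum_add_distrib]
    exact sum_congr rfl fun k _ => by ring
  rw [expand, hab] at hrest
  nlinarith [sq_nonneg t]

theorem Matrix.dotProduct_mulVec_conj {n : Type*} [Fintype n] (U M : Matrix n n ℝ) (x y : n → ℝ) :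
    x ⬝ᵥ (U * M * star U) *ᵥ y = (star U *ᵥ x) ⬝ᵥ M *ᵥ (star U *ᵥ y) := by
  rw [star_eq_conjTranspose, conjTranspose_eq_transpose_of_trivial, ← mulVec_mulVec,
    ← mulVec_mulVec, dotProduct_mulVec, ← mulVec_transpose]

theorem Matrix.IsHermitian.dotProduct_mulVec_sub_dotProduct {n : Type*} [Fintype n]
    [DecidableEq n] {A : Matrix n n ℝ} (hA : A.IsHermitian) (x y : n → ℝ) :
    x ⬝ᵥ A *ᵥ y - x ⬝ᵥ y = ∑ k, (hA.eigenvalues k - 1) *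
      (star (hA.eigenvectorUnitary : Matrix n n ℝ) *ᵥ x) k *
      (star (hA.eigenvectorUnitary : Matrix n n ℝ) *ᵥ y) k := by
  set U : Matrix n n ℝ := (hA.eigenvectorUnitary : Matrix n n ℝ)
  have hA' : x ⬝ᵥ A *ᵥ y =
      (star U *ᵥ x) ⬝ᵥ diagonal (RCLike.ofReal ∘ hA.eigenvalues) *ᵥ (star U *ᵥ y) := by
    conv_lhs => rw [hA.spectral_theorem, Unitary.conjStarAlgAut_apply]
    exact dotProduct_mulVec_conj _ _ x y
  have hone : x ⬝ᵥ y = (star U *ᵥ x) ⬝ᵥ (star U *ᵥ y) := by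
    simpa [U] using dotProduct_mulVec_conj U 1 x y
  rw [hA', hone, dotProduct, dotProduct, ← sum_sub_distrib]
  refine sum_congr rfl fun k _ => ?_
  simp [mulVec_diagonal]
  ring

theorem Matrix.IsHermitian.dotProduct_mulVec_le_of_orthogonal {n : Type*} [Fintype n]
    [DecidableEq n] {A : Matrix n n ℝ} (hA : A.IsHermitian)
    (hA₁ : #{k | 1 < hA.eigenvalues k} ≤ 1) {w₁ w₂ : n → ℝ}
    (h₁ : w₁ ⬝ᵥ w₁ < w₁ ⬝ᵥ A *ᵥ w₁) (h₁₂ : w₁ ⬝ᵥ A *ᵥ w₂ = w₁ ⬝ᵥ w₂) :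
    w₂ ⬝ᵥ A *ᵥ w₂ ≤ w₂ ⬝ᵥ w₂ := by
  have h₁' := sub_pos.mpr h₁
  have h₁₂' := sub_eq_zero.mpr h₁₂
  rw [hA.dotProduct_mulVec_sub_dotProduct] at h₁' h₁₂'
  rw [← sub_nonpos, hA.dotProduct_mulVec_sub_dotProduct]
  simp only [mul_assoc, ← sq] at h₁' ⊢
  exact sum_mul_sq_nonpos_of_sum_mul_mul_eq_zero (by simpa only [sub_pos] using hA₁) h₁' h₁₂'

theorem Matrix.extend_dotProduct_s9 {V W : Type*} [Fintype V] [Fintype W] {f : W → V}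
    (hf : Function.Injective f) (w : W → ℝ) (z : V → ℝ) :
    Function.extend f w 0 ⬝ᵥ z = w ⬝ᵥ (z ∘ f) := by
  symm
  refine Fintype.sum_of_injective f hf _ _ (fun v hv => ?_) (fun a => ?_)
  · simp [Function.extend_apply' _ _ _ fun ⟨a, ha⟩ => hv ⟨a, ha⟩]
  · simp [hf.extend_apply]

theorem Matrix.extend_dotProduct_mulVec_extend_s9 {V W : Type*} [Fintype V] [Fintype W] {f : W → V}
    (hf : Function.Injective f) (M : Matrix V V ℝ) (w w' : W → ℝ) :
    Function.extend f w 0 ⬝ᵥ M *ᵥ Function.extend f w' 0 = w ⬝ᵥ M.submatrix f f *ᵥ w' := by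
  rw [extend_dotProduct_s9 hf]
  congr 1
  ext a
  simp only [Function.comp_apply, mulVec, submatrix_apply, dotProduct_comm (M (f a)),
    extend_dotProduct_s9 hf]
  exact dotProduct_comm _ _

theorem Matrix.extend_dotProduct_extend_s9 {V W : Type*} [Fintype V] [Fintype W] [DecidableEq V]
    [DecidableEq W] {f : W → V} (hf : Function.Injective f) (w w' : W → ℝ) :
    Function.extend f w 0 ⬝ᵥ Function.extend f w' 0 = w ⬝ᵥ w' := by
  simpa [submatrix_one f hf] using extend_dotProduct_mulVec_extend_s9 hf 1 w w'

theorem SimpleGraph.Embedding.dotProduct_adjMatrix_mulVec_le_of_orthogonal {V W : Type*}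
    [Fintype V] [DecidableEq V] [Fintype W] [DecidableEq W] {G : SimpleGraph V}
    {H : SimpleGraph W} [DecidableRel H.Adj] (hG : eigCount G (fun t => 1 < t) ≤ 1)
    (f : H ↪g G) {w₁ w₂ : W → ℝ} (h₁ : w₁ ⬝ᵥ w₁ < w₁ ⬝ᵥ H.adjMatrix ℝ *ᵥ w₁)
    (h₁₂ : w₁ ⬝ᵥ H.adjMatrix ℝ *ᵥ w₂ = w₁ ⬝ᵥ w₂) :
    w₂ ⬝ᵥ H.adjMatrix ℝ *ᵥ w₂ ≤ w₂ ⬝ᵥ w₂ := by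
  classical
  have hG' : #{k | 1 < (adjMatrix_isHermitian G).eigenvalues k} ≤ 1 := hG
  simp only [← f.submatrix_adjMatrix ℝ, ← extend_dotProduct_mulVec_extend_s9 f.injective,
    ← extend_dotProduct_extend_s9 f.injective] at h₁ h₁₂ ⊢
  exact (adjMatrix_isHermitian G).dotProduct_mulVec_le_of_orthogonal hG' h₁ h₁₂

theorem Fin.eq_add_two_or_eq_add_two {a b : Fin 5} (hab : a ≠ b)
    (h : ¬(b = a + 1 ∨ a = b + 1)) : b = a + 2 ∨ a = b + 2 := by
  revert a b
  decide

namespace SimpleGraph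

variable {V : Type*} {G : SimpleGraph V}

theorem not_adj_of_four_le_egirth (hG : 4 ≤ G.egirth) {a b c : V} (hab : G.Adj a b)
    (hbc : G.Adj b c) : ¬ G.Adj c a := fun hca => by
  have hcycle : (Walk.cons hab (Walk.cons hbc (Walk.cons hca Walk.nil))).IsCycle := by
    simp [Walk.isCycle_def, hab.ne, hbc.ne, hca.ne, hab.ne', hca.ne', Sym2.eq,
      Sym2.rel_iff']
  have := hG.trans (egirth_le_length hcycle)
  norm_num at this

theorem not_adj_of_five_le_egirth (hG : 5 ≤ G.egirth) {a b c d : V} (hac : a ≠ c) (hbd : b ≠ d)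
    (hab : G.Adj a b) (hbc : G.Adj b c) (hcd : G.Adj c d) : ¬ G.Adj d a := fun hda => by
  have hcycle :
      (Walk.cons hab (Walk.cons hbc (Walk.cons hcd (Walk.cons hda Walk.nil)))).IsCycle := by
    simp [Walk.isCycle_def, hab.ne, hbc.ne, hcd.ne, hda.ne, hab.ne', hda.ne',
      hac, hbd, Sym2.eq, Sym2.rel_iff']
    aesop
  have := hG.trans (egirth_le_length hcycle)
  norm_num at this

theorem pentagon_adj_iff_of_four_le_egirth (hG : 4 ≤ G.egirth) {x : Fin 5 → V}
    (hx : ∀ a, G.Adj (x a) (x (a + 1))) (a b : Fin 5) :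
    G.Adj (x a) (x b) ↔ b = a + 1 ∨ a = b + 1 := by
  refine ⟨fun hab => ?_, ?_⟩
  · by_contra h
    have hx₂ (c : Fin 5) : G.Adj (x (c + 1)) (x (c + 2)) := by
      simpa [add_assoc, one_add_one_eq_two] using hx (c + 1)
    have hne : a ≠ b := by rintro rfl; exact G.irrefl hab
    rcases Fin.eq_add_two_or_eq_add_two hne h with rfl | rfl
    exacts [not_adj_of_four_le_egirth hG (hx a) (hx₂ a) hab.symm,
      not_adj_of_four_le_egirth hG (hx b) (hx₂ b) hab]
  · rintro (rfl | rfl)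
    exacts [hx a, (hx b).symm]

end SimpleGraph

def pentagonWithPendants : SimpleGraph (Fin 5 ⊕ Fin 2) where
  Adj
    | .inl a, .inl b => b = a + 1 ∨ a = b + 1
    | .inl a, .inr c | .inr c, .inl a => a = ![0, 2] c
    | .inr _, .inr _ => False
  symm := ⟨by rintro (a | c) (b | d) h <;> first | exact h | exact Or.symm h⟩
  loopless := ⟨by
    rintro (a | c) h
    exacts [by revert a h; decide, h]⟩

namespace pentagonWithPendants

@[simp] theorem adj_inl_inl {a b : Fin 5} :
    pentagonWithPendants.Adj (.inl a) (.inl b) ↔ b = a + 1 ∨ a = b + 1 := Iff.rfl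

@[simp] theorem adj_inl_inr {a : Fin 5} {c : Fin 2} :
    pentagonWithPendants.Adj (.inl a) (.inr c) ↔ a = ![0, 2] c := Iff.rfl

@[simp] theorem adj_inr_inl {a : Fin 5} {c : Fin 2} :
    pentagonWithPendants.Adj (.inr c) (.inl a) ↔ a = ![0, 2] c := Iff.rfl

@[simp] theorem not_adj_inr_inr {c d : Fin 2} :
    ¬ pentagonWithPendants.Adj (.inr c) (.inr d) := id

instance : DecidableRel pentagonWithPendants.Adj
  | .inl _, .inl _ => decidable_of_iff' _ adj_inl_inl
  | .inl _, .inr _ => decidable_of_iff' _ adj_inl_inr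
  | .inr _, .inl _ => decidable_of_iff' _ adj_inr_inl
  | .inr _, .inr _ => .isFalse not_adj_inr_inr

end pentagonWithPendants

theorem isEmpty_pentagonWithPendants_embedding {V : Type*} [Fintype V] [DecidableEq V]
    {G : SimpleGraph V} (hG : eigCount G (fun t => 1 < t) ≤ 1) :
    IsEmpty (pentagonWithPendants ↪g G) := by
  -- `A - 1` is positive definite on the span of these two vectors, so `λ₂ > 1`.
  let w₁ : Fin 5 ⊕ Fin 2 → ℝ := Sum.elim ![2, 2, 2, 1, 1] ![1, 1]
  let w₂ : Fin 5 ⊕ Fin 2 → ℝ := Sum.elim ![2, 0, -2, -1, 1] ![1, -1]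
  refine ⟨fun f => (f.dotProduct_adjMatrix_mulVec_le_of_orthogonal hG (w₁ := w₁) (w₂ := w₂)
    ?_ ?_).not_gt ?_⟩ <;>
  simp +decide [w₁, w₂, dotProduct, mulVec, Fintype.sum_sum_type,
    Fin.sum_univ_five, Fin.sum_univ_two, SimpleGraph.adjMatrix_apply] <;>
  norm_num

theorem nonempty_pentagonWithPendants_embedding {V : Type*} {G : SimpleGraph V} {x : Fin 5 → V}
    (hinj : Function.Injective x) (hx : ∀ a b, G.Adj (x a) (x b) ↔ b = a + 1 ∨ a = b + 1)
    {u v : V} (huv : u ≠ v) (hu : u ∉ Set.range x) (hv : v ∉ Set.range x) (i : Fin 5)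
    (hui : ∀ k, G.Adj u (x k) ↔ k = i) (hvi : ∀ k, G.Adj v (x k) ↔ k = i + 2)
    (hnuv : ¬ G.Adj u v) : Nonempty (pentagonWithPendants ↪g G) := by
  let p : Fin 5 ⊕ Fin 2 → V := Sum.elim (fun k => x (k + i)) ![u, v]
  have hp : Function.Injective p := by
    refine (hinj.comp (add_left_injective i)).sumElim ?_ ?_
    · intro c d
      fin_cases c <;> fin_cases d <;> simp [huv, huv.symm]
    · intro k c
      fin_cases c
      exacts [fun h => hu ⟨_, h⟩, fun h => hv ⟨_, h⟩]
  refine ⟨⟨⟨p, hp⟩, ?_⟩⟩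
  rintro (a | c) (b | d)
  · simp [p, hx, add_right_comm _ i 1]
  · fin_cases d <;> simp [p, G.adj_comm _ u, G.adj_comm _ v, hui, hvi, add_comm _ i]
  · fin_cases c <;> simp [p, hui, hvi, add_comm _ i]
  · fin_cases c <;> fin_cases d <;> simp [p, hnuv, G.adj_comm v u]

theorem girth_five_pendant_adjacency_general {V : Type*} [Fintype V] [DecidableEq V]
    (G : SimpleGraph V) (hl : eigCount G (fun t => 1 < t) ≤ 1)
    (hgirth : G.egirth = 5)
    (x : Fin 5 → V) (hinj : Function.Injective x) (hcyc : ∀ i, G.Adj (x i) (x (i + 1)))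
    (u v : V) (huv : u ≠ v) (i j : Fin 5) (hij : i ≠ j)
    (hu : u ∉ Set.range x) (hui : ∀ k, G.Adj u (x k) ↔ k = i)
    (hv : v ∉ Set.range x) (hvj : ∀ k, G.Adj v (x k) ↔ k = j) :
    G.Adj u v ↔ ¬ G.Adj (x i) (x j) := by
  have hx := SimpleGraph.pentagon_adj_iff_of_four_le_egirth (by rw [hgirth]; decide) hcyc
  refine ⟨fun hadj hxij => ?_, fun hxij => ?_⟩
  · exact SimpleGraph.not_adj_of_five_le_egirth hgirth.ge (fun h => hu ⟨j, h.symm⟩)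
      (fun h => hv ⟨i, h.symm⟩) hadj ((hvj j).2 rfl) hxij.symm ((hui i).2 rfl).symm
  · by_contra hnadj
    have hH := isEmpty_pentagonWithPendants_embedding hl
    rcases Fin.eq_add_two_or_eq_add_two hij (by rwa [← hx]) with rfl | rfl
    · exact (nonempty_pentagonWithPendants_embedding hinj hx huv hu hv i hui hvj hnadj).elim
        hH.false
    · exact (nonempty_pentagonWithPendants_embedding hinj hx huv.symm hv hu j hvj hui
        (hnadj ∘ G.adj_symm)).elim hH.false

/-- under the girth-5 setting with 5-cycle `x₀x₁x₂x₃x₄x₀`, if `u ≠ v` lie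
outside the cycle with `N(u) ∩ cycle = {x i}` and `N(v) ∩ cycle = {x j}` for `i ≠ j`, then
`u ∼ v` exactly when `x i ≁ x j`. -/
theorem girth_five_pendant_adjacency {V : Type*} [Fintype V] [DecidableEq V]
    (G : SimpleGraph V) (hconn : G.Connected) (hl : eigCount G (fun t => 1 < t) ≤ 1)
    (hplanar : WagnerPlanar G) (hgirth : G.egirth = 5)
    (x : Fin 5 → V) (hinj : Function.Injective x) (hcyc : ∀ i, G.Adj (x i) (x (i + 1)))
    (u v : V) (huv : u ≠ v) (i j : Fin 5) (hij : i ≠ j)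
    (hu : u ∉ Set.range x) (hui : ∀ k, G.Adj u (x k) ↔ k = i)
    (hv : v ∉ Set.range x) (hvj : ∀ k, G.Adj v (x k) ↔ k = j) :
    G.Adj u v ↔ ¬ G.Adj (x i) (x j) :=
  girth_five_pendant_adjacency_general G hl hgirth x hinj hcyc u v huv i j hij hu hui hv hvj
end

section
/- In the girth-4 setting: every vertex of T has at most two neighbors among {x₁,x₂,x₃,x₄}, and if it has exactly two then they form an opposite pair {x_i, x_{i+2}} (so T = T₀ ∪ T₁ ∪ T₂ and T₂ = T_{{x₁,x₃}} ∪ T_{{x₂,x₄}}); for each i there are no edges between T_{{x_i,x_{i+2}}} and T_{x_i}; each set T_{x_i} and each set T_{{x_i,x_{i+2}}} is an independent set of G; and |T_{x_i}| ≤ 3 for each i ∈ {1,2,3,4}. -/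
/-- For a 4-cycle `x₀x₁x₂x₃x₀` in `G` and `S ⊆ Fin 4`, the set
`T_S = {v ∉ {x₀,x₁,x₂,x₃} : N(v) ∩ {x₀,x₁,x₂,x₃} = {x i : i ∈ S}}`. -/
def TS {V : Type*} (G : SimpleGraph V) (x : Fin 4 → V) (S : Set (Fin 4)) : Set V :=
  {v | v ∉ Set.range x ∧ ∀ i, G.Adj v (x i) ↔ i ∈ S}

/-- The set `T_j` of vertices outside the 4-cycle having exactly `j` neighbors among
`{x₀,x₁,x₂,x₃}`. -/
def Tdeg {V : Type*} (G : SimpleGraph V) (x : Fin 4 → V) (j : ℕ) : Set V :=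
  {v | v ∉ Set.range x ∧ {i : Fin 4 | G.Adj v (x i)}.ncard = j}

/-!
A vertex outside the 4-cycle that is adjacent to two consecutive `x i` closes a triangle; this
gives the shape of the neighbourhoods on the cycle and, through the common neighbour `x i`, all the
independence statements.

If `T_{x_i}` had four vertices, they would induce with the cycle a 4-cycle carrying four pendant
vertices at one of its vertices. That graph has two test vectors spanning a plane on which
`w ⬝ᵥ A *ᵥ w > w ⬝ᵥ w`; extended by zero to `G` they keep this property, and the easy half of the
Courant–Fischer theorem turns such a plane into two eigenvalues of `G` larger than `1`.
-/

open Matrix Finset Module Function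

namespace Matrix.IsHermitian

variable {n : Type*} [Fintype n] [DecidableEq n] {A : Matrix n n ℝ} (hA : A.IsHermitian)

lemma vecMul_eigenvectorUnitary (v : n → ℝ) :
    v ᵥ* (hA.eigenvectorUnitary : Matrix n n ℝ) =
      star (hA.eigenvectorUnitary : Matrix n n ℝ) *ᵥ v := by
  rw [star_eq_conjTranspose, conjTranspose_eq_transpose_of_trivial, mulVec_transpose]

lemma dotProduct_mulVec_eq_sum_eigenvalues (v : n → ℝ) :
    v ⬝ᵥ (A *ᵥ v) =
      ∑ i, hA.eigenvalues i * (star (hA.eigenvectorUnitary : Matrix n n ℝ) *ᵥ v) i ^ 2 := by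
  set U : Matrix n n ℝ := ↑hA.eigenvectorUnitary
  have hA' : A = U * diagonal hA.eigenvalues * star U := by
    simpa [Unitary.conjStarAlgAut_apply] using hA.spectral_theorem
  conv_lhs => rw [hA', ← mulVec_mulVec, ← mulVec_mulVec, dotProduct_mulVec,
    vecMul_eigenvectorUnitary]
  simp only [dotProduct, mulVec_diagonal, sq]
  exact Finset.sum_congr rfl fun i _ => by ring

lemma dotProduct_self_eq_sum_sq (v : n → ℝ) :
    v ⬝ᵥ v = ∑ i, (star (hA.eigenvectorUnitary : Matrix n n ℝ) *ᵥ v) i ^ 2 := by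
  nth_rw 2 [← one_mulVec v]
  rw [← Unitary.mul_star_self_of_mem hA.eigenvectorUnitary.2, ← mulVec_mulVec, dotProduct_mulVec,
    vecMul_eigenvectorUnitary]
  simp only [dotProduct, sq]

lemma dotProduct_mulVec_le_of_forall_eigenvalues_gt {r : ℝ} {v : n → ℝ}
    (hv : ∀ i, r < hA.eigenvalues i → (star (hA.eigenvectorUnitary : Matrix n n ℝ) *ᵥ v) i = 0) :
    v ⬝ᵥ (A *ᵥ v) ≤ r * (v ⬝ᵥ v) := by
  rw [hA.dotProduct_mulVec_eq_sum_eigenvalues, hA.dotProduct_self_eq_sum_sq, Finset.mul_sum]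
  refine Finset.sum_le_sum fun i _ => ?_
  by_cases hi : r < hA.eigenvalues i
  · simp [hv i hi]
  · exact mul_le_mul_of_nonneg_right (not_lt.1 hi) (sq_nonneg _)

theorem finrank_le_card_eigenvalues_gt {r : ℝ} {E : Type*} [AddCommGroup E] [Module ℝ E]
    [FiniteDimensional ℝ E] (Y : E →ₗ[ℝ] n → ℝ)
    (hY : ∀ c, c ≠ 0 → r * (Y c ⬝ᵥ Y c) < Y c ⬝ᵥ (A *ᵥ Y c)) :
    finrank ℝ E ≤ #{i | r < hA.eigenvalues i} := by
  let L : (n → ℝ) →ₗ[ℝ] {i // r < hA.eigenvalues i} → ℝ :=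
    LinearMap.funLeft ℝ ℝ Subtype.val ∘ₗ
      (star (hA.eigenvectorUnitary : Matrix n n ℝ)).mulVecLin
  have hinj : Injective (L ∘ₗ Y) := by
    refine (injective_iff_map_eq_zero _).2 fun c hc => ?_
    by_contra hc0
    refine (hY c hc0).not_ge (hA.dotProduct_mulVec_le_of_forall_eigenvalues_gt fun i hi => ?_)
    exact congr_fun hc ⟨i, hi⟩
  simpa [Fintype.card_subtype] using LinearMap.finrank_le_finrank_of_injective hinj

end Matrix.IsHermitian

def SimpleGraph.cycleFourPendants : SimpleGraph (Fin 4 ⊕ Fin 4) where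
  Adj
    | .inl i, .inl j => j = i + 1 ∨ i = j + 1
    | .inl i, .inr _ => i = 0
    | .inr _, .inl j => j = 0
    | .inr _, .inr _ => False
  symm := ⟨by rintro (i | k) (j | l) h <;> simp_all [or_comm]⟩
  loopless := ⟨by rintro (i | k) h <;> simp at h⟩

namespace SimpleGraph.cycleFourPendants

@[simp] lemma adj_inl_inl {i j : Fin 4} :
    cycleFourPendants.Adj (.inl i) (.inl j) ↔ j = i + 1 ∨ i = j + 1 := .rfl
@[simp] lemma adj_inl_inr {i k : Fin 4} : cycleFourPendants.Adj (.inl i) (.inr k) ↔ i = 0 := .rfl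
@[simp] lemma adj_inr_inl {j k : Fin 4} : cycleFourPendants.Adj (.inr k) (.inl j) ↔ j = 0 := .rfl
@[simp] lemma not_adj_inr_inr {k l : Fin 4} : ¬cycleFourPendants.Adj (.inr k) (.inr l) := id

instance : DecidableRel cycleFourPendants.Adj
  | .inl _, .inl _ => decidable_of_iff' _ adj_inl_inl
  | .inl _, .inr _ => decidable_of_iff' _ adj_inl_inr
  | .inr _, .inl _ => decidable_of_iff' _ adj_inr_inl
  | .inr _, .inr _ => .isFalse not_adj_inr_inr

-- The second eigenvalue of `cycleFourPendants` is only `√(4 - 2√2) ≈ 1.08`. With `A` its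
-- adjacency matrix, both vectors have `w ⬝ᵥ A *ᵥ w - w ⬝ᵥ w = 1` and are orthogonal for this form.
def testVectors : Fin 2 → Fin 4 ⊕ Fin 4 → ℝ :=
  ![Sum.elim ![1, -1, -2, -1] 1, Sum.elim ![0, 1, 1, 1] 0]

lemma dotProduct_adjMatrix_mulVec (c : Fin 2 → ℝ) :
    let w := Fintype.linearCombination ℝ testVectors c
    w ⬝ᵥ (cycleFourPendants.adjMatrix ℝ *ᵥ w) = w ⬝ᵥ w + c 0 ^ 2 + c 1 ^ 2 := by
  simp [Fintype.linearCombination_apply, testVectors, dotProduct, mulVec,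
    Fintype.sum_sum_type, Fin.sum_univ_four, SimpleGraph.adjMatrix_apply]
  ring

end SimpleGraph.cycleFourPendants

lemma Function.Injective.extend_zero_dotProduct {ι V R : Type*} [Fintype ι] [Fintype V]
    [NonUnitalNonAssocSemiring R] {φ : ι → V} (hφ : Injective φ) (c : ι → R) (g : V → R) :
    extend φ c 0 ⬝ᵥ g = c ⬝ᵥ (g ∘ φ) :=
  (Fintype.sum_of_injective φ hφ _ _
    (fun a ha => by rw [extend_apply' _ _ _ fun ⟨i, hi⟩ => ha ⟨i, hi⟩, Pi.zero_apply, zero_mul])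
    fun i => by rw [hφ.extend_apply]; rfl).symm

lemma Function.Injective.extend_zero_dotProduct_mulVec {ι V R : Type*} [Fintype ι] [Fintype V]
    [CommSemiring R] {φ : ι → V} (hφ : Injective φ) (A : Matrix V V R) (c : ι → R) :
    extend φ c 0 ⬝ᵥ (A *ᵥ extend φ c 0) = c ⬝ᵥ (A.submatrix φ φ *ᵥ c) := by
  rw [hφ.extend_zero_dotProduct]
  congr 1
  funext j
  rw [comp_apply, mulVec, dotProduct_comm, hφ.extend_zero_dotProduct, mulVec, dotProduct_comm]
  rfl

theorem SimpleGraph.Embedding.finrank_le_eigCount {V W : Type*} [Fintype V] [DecidableEq V]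
    [Fintype W] {G : SimpleGraph V} {H : SimpleGraph W} [DecidableRel H.Adj] (φ : H ↪g G)
    {r : ℝ} {E : Type*} [AddCommGroup E] [Module ℝ E] [FiniteDimensional ℝ E]
    (Y : E →ₗ[ℝ] W → ℝ) (hY : ∀ c, c ≠ 0 → r * (Y c ⬝ᵥ Y c) < Y c ⬝ᵥ (H.adjMatrix ℝ *ᵥ Y c)) :
    finrank ℝ E ≤ eigCount G (r < ·) := by
  classical
  unfold eigCount
  convert (adjMatrix_isHermitian G).finrank_le_card_eigenvalues_gt
    (ExtendByZero.linearMap ℝ φ ∘ₗ Y) fun c hc => ?_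
  change r * (extend φ (Y c) 0 ⬝ᵥ extend φ (Y c) 0) <
    extend φ (Y c) 0 ⬝ᵥ (G.adjMatrix ℝ *ᵥ extend φ (Y c) 0)
  rw [φ.injective.extend_zero_dotProduct, extend_comp φ.injective,
    φ.injective.extend_zero_dotProduct_mulVec, Embedding.submatrix_adjMatrix]
  exact hY c hc

theorem SimpleGraph.Embedding.two_le_eigCount_of_cycleFourPendants {V : Type*} [Fintype V]
    [DecidableEq V] {G : SimpleGraph V} (φ : cycleFourPendants ↪g G) :
    2 ≤ eigCount G (1 < ·) := by
  simpa using φ.finrank_le_eigCount (Fintype.linearCombination ℝ cycleFourPendants.testVectors)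
    fun c hc => by
      have hpos : 0 < c 0 ^ 2 + c 1 ^ 2 := by
        have : c 0 ≠ 0 ∨ c 1 ≠ 0 := by
          contrapose! hc
          ext i
          fin_cases i <;> simp [hc]
        rcases this with h | h <;> positivity
      rw [one_mul, cycleFourPendants.dotProduct_adjMatrix_mulVec]
      linarith

section TriangleFree

variable {V : Type*} {G : SimpleGraph V}

lemma SimpleGraph.CliqueFree.not_adj_of_adj_of_adj_s11 (htf : G.CliqueFree 3) {u w z : V}
    (hu : G.Adj u z) (hw : G.Adj w z) : ¬G.Adj u w := by
  classical
  exact fun h => htf {u, w, z} (SimpleGraph.is3Clique_triple_iff.2 ⟨h, hu, hw⟩)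

lemma SimpleGraph.CliqueFree.adj_iff_of_cycle_four (htf : G.CliqueFree 3) {x : Fin 4 → V}
    (hcyc : ∀ i, G.Adj (x i) (x (i + 1))) (i j : Fin 4) :
    G.Adj (x i) (x j) ↔ j = i + 1 ∨ i = j + 1 := by
  obtain ⟨d, rfl⟩ : ∃ d, j = i + d := ⟨j - i, by abel⟩
  fin_cases d
  · simp
  · simpa using hcyc i
  · simpa [add_assoc] using htf.not_adj_of_adj_of_adj_s11 (hcyc i) (hcyc (i + 1)).symm
  · simpa [add_assoc, eq_comm] using (hcyc (i + 3)).symm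

lemma Fin.ncard_le_two_of_forall_add_one_notMem {s : Set (Fin 4)} (hs : ∀ i ∈ s, i + 1 ∉ s) :
    s.ncard ≤ 2 := by
  obtain ⟨t, rfl⟩ := s.toFinite.exists_finset_coe
  simp only [Finset.mem_coe, Set.ncard_coe_finset] at hs ⊢
  revert t
  decide

lemma Fin.ncard_eq_two_iff_of_forall_add_one_notMem {s : Set (Fin 4)}
    (hs : ∀ i ∈ s, i + 1 ∉ s) : s.ncard = 2 ↔ s = {0, 2} ∨ s = {1, 3} := by
  obtain ⟨t, rfl⟩ := s.toFinite.exists_finset_coe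
  simp only [Finset.mem_coe, Set.ncard_coe_finset] at hs ⊢
  norm_cast
  revert t
  decide

lemma mem_TS_iff {x : Fin 4 → V} {S : Set (Fin 4)} {v : V} :
    v ∈ TS G x S ↔ v ∉ Set.range x ∧ {i | G.Adj v (x i)} = S := by
  simp [TS, Set.ext_iff]

lemma SimpleGraph.CliqueFree.not_adj_of_mem_TS (htf : G.CliqueFree 3) {x : Fin 4 → V}
    {S S' : Set (Fin 4)} {i : Fin 4} (hi : i ∈ S) (hi' : i ∈ S') {u w : V} (hu : u ∈ TS G x S)
    (hw : w ∈ TS G x S') : ¬G.Adj u w :=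
  htf.not_adj_of_adj_of_adj_s11 ((hu.2 i).2 hi) ((hw.2 i).2 hi')

def SimpleGraph.CliqueFree.cycleFourPendantsEmbedding (htf : G.CliqueFree 3) {x : Fin 4 → V}
    (hinj : Injective x) (hcyc : ∀ i, G.Adj (x i) (x (i + 1))) (i : Fin 4) (u : Fin 4 ↪ V)
    (hu : ∀ k, u k ∈ TS G x {i}) : cycleFourPendants ↪g G where
  toFun := Sum.elim (fun j => x (i + j)) u
  inj' := (hinj.comp (add_right_injective i)).sumElim u.injective fun j k h => (hu k).1 ⟨i + j, h⟩
  map_rel_iff' := by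
    rintro (j | k) (j' | l)
    · simpa using htf.adj_iff_of_cycle_four (x := fun j => x (i + j))
        (fun j => by simpa [add_assoc] using hcyc (i + j)) j j'
    · simp [G.adj_comm _ (u l), (hu l).2]
    · simp [(hu k).2]
    · simpa using htf.not_adj_of_mem_TS (Set.mem_singleton i) (Set.mem_singleton i) (hu k) (hu l)

theorem ncard_TS_singleton_le_three [Fintype V] [DecidableEq V] (htf : G.CliqueFree 3)
    (hl : eigCount G (1 < ·) ≤ 1) {x : Fin 4 → V} (hinj : Injective x)
    (hcyc : ∀ i, G.Adj (x i) (x (i + 1))) (i : Fin 4) : (TS G x {i}).ncard ≤ 3 := by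
  classical
  by_contra! h
  obtain ⟨u⟩ : Nonempty (Fin 4 ↪ TS G x {i}) := Function.Embedding.nonempty_of_card_le <| by
    rw [Fintype.card_fin, ← Nat.card_eq_fintype_card, Nat.card_coe_set_eq]
    omega
  have := (htf.cycleFourPendantsEmbedding hinj hcyc i (u.trans (Embedding.subtype _))
    fun k => (u k).2).two_le_eigCount_of_cycleFourPendants
  omega

end TriangleFree

theorem girth_four_structure_general {V : Type*} [Fintype V] [DecidableEq V] (G : SimpleGraph V)
    (htf : G.CliqueFree 3)
    (hl : eigCount G (fun t => 1 < t) ≤ 1)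
    (x : Fin 4 → V) (hinj : Function.Injective x)
    (hcyc : ∀ i, G.Adj (x i) (x (i + 1))) :
    (∀ v : V, v ∉ Set.range x → {i : Fin 4 | G.Adj v (x i)}.ncard ≤ 2) ∧
    {v : V | v ∉ Set.range x} = Tdeg G x 0 ∪ Tdeg G x 1 ∪ Tdeg G x 2 ∧
    Tdeg G x 2 = TS G x {0, 2} ∪ TS G x {1, 3} ∧
    (∀ i : Fin 4, ∀ u ∈ TS G x {i, i + 2}, ∀ w ∈ TS G x {i}, ¬ G.Adj u w) ∧
    (∀ i : Fin 4, ∀ u ∈ TS G x {i}, ∀ w ∈ TS G x {i}, ¬ G.Adj u w) ∧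
    (∀ i : Fin 4, ∀ u ∈ TS G x {i, i + 2}, ∀ w ∈ TS G x {i, i + 2}, ¬ G.Adj u w) ∧
    (∀ i : Fin 4, (TS G x {i}).ncard ≤ 3) := by
  have hnbr (v : V) : ∀ i ∈ {i | G.Adj v (x i)}, i + 1 ∉ {i | G.Adj v (x i)} :=
    fun i hi hi₁ => htf.not_adj_of_adj_of_adj_s11 hi.symm hi₁.symm (hcyc i)
  have hle (v : V) := Fin.ncard_le_two_of_forall_add_one_notMem (hnbr v)
  refine ⟨fun v _ => hle v, ?_, ?_, ?_, ?_, ?_, ncard_TS_singleton_le_three htf hl hinj hcyc⟩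
  · ext v
    simp only [Tdeg, Set.mem_union, Set.mem_ofPred_eq, ← and_or_left, iff_self_and]
    have := hle v
    omega
  · ext v
    simp only [Tdeg, Set.mem_union, Set.mem_ofPred_eq, mem_TS_iff,
      Fin.ncard_eq_two_iff_of_forall_add_one_notMem (hnbr v), and_or_left]
  all_goals exact fun i u hu w hw => htf.not_adj_of_mem_TS (i := i) (by simp) (by simp) hu hw

/-- in the girth-4 setting, every vertex outside the 4-cycle has at most two
neighbors on it; `T = T₀ ∪ T₁ ∪ T₂` with `T₂ = T_{{x₀,x₂}} ∪ T_{{x₁,x₃}}`; there are no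
edges between `T_{{x_i,x_{i+2}}}` and `T_{x_i}`; each `T_{x_i}` and each `T_{{x_i,x_{i+2}}}`
is independent; and `|T_{x_i}| ≤ 3` for every `i`. -/
theorem girth_four_structure {V : Type*} [Fintype V] [DecidableEq V] (G : SimpleGraph V)
    (hconn : G.Connected) (htf : G.CliqueFree 3)
    (hl : eigCount G (fun t => 1 < t) ≤ 1) (hplanar : WagnerPlanar G)
    (hgirth : G.egirth = 4) (x : Fin 4 → V) (hinj : Function.Injective x)
    (hcyc : ∀ i, G.Adj (x i) (x (i + 1))) :
    (∀ v : V, v ∉ Set.range x → {i : Fin 4 | G.Adj v (x i)}.ncard ≤ 2) ∧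
    {v : V | v ∉ Set.range x} = Tdeg G x 0 ∪ Tdeg G x 1 ∪ Tdeg G x 2 ∧
    Tdeg G x 2 = TS G x {0, 2} ∪ TS G x {1, 3} ∧
    (∀ i : Fin 4, ∀ u ∈ TS G x {i, i + 2}, ∀ w ∈ TS G x {i}, ¬ G.Adj u w) ∧
    (∀ i : Fin 4, ∀ u ∈ TS G x {i}, ∀ w ∈ TS G x {i}, ¬ G.Adj u w) ∧
    (∀ i : Fin 4, ∀ u ∈ TS G x {i, i + 2}, ∀ w ∈ TS G x {i, i + 2}, ¬ G.Adj u w) ∧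
    (∀ i : Fin 4, (TS G x {i}).ncard ≤ 3) :=
  girth_four_structure_general G htf hl x hinj hcyc
end

section
/- In the girth-4 setting: T₂ is an independent set of G, i.e., no two vertices of T each having exactly two neighbors among {x₁,x₂,x₃,x₄} are adjacent. -/
/-- The induced subgraph on a singleton set is connected. -/
lemma induce_singleton_connected' {V : Type*} (G : SimpleGraph V) (a : V) :
    (G.induce {a}).Connected := by
  rw [SimpleGraph.connected_iff]
  refine ⟨fun u v => ?_, ⟨⟨a, rfl⟩⟩⟩
  have h : u = v := Subtype.ext ((Set.mem_singleton_iff.mp u.2).trans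
    (Set.mem_singleton_iff.mp v.2).symm)
  rw [h]

/-- in the girth-4 setting, `T₂` is an independent set of `G`. -/
theorem girth_four_T2_independent {V : Type*} [Fintype V] [DecidableEq V] (G : SimpleGraph V)
    (hconn : G.Connected) (htf : G.CliqueFree 3)
    (hl : eigCount G (fun t => 1 < t) ≤ 1) (hplanar : WagnerPlanar G)
    (hgirth : G.egirth = 4) (x : Fin 4 → V) (hinj : Function.Injective x)
    (hcyc : ∀ i, G.Adj (x i) (x (i + 1))) :
    ∀ u ∈ Tdeg G x 2, ∀ v ∈ Tdeg G x 2, ¬ G.Adj u v := by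
  classical
  rintro u ⟨hur, hu2⟩ v ⟨hvr, hv2⟩ huv
  have htri : ∀ p q r : V, G.Adj p q → G.Adj p r → G.Adj q r → False := fun p q r h1 h2 h3 =>
    htf {p, q, r} (SimpleGraph.is3Clique_triple_iff.mpr ⟨h1, h2, h3⟩)
  obtain ⟨a, b, hab, hSu⟩ := Set.ncard_eq_two.mp hu2
  obtain ⟨c, d, hcd, hSv⟩ := Set.ncard_eq_two.mp hv2
  have hu : ∀ i : Fin 4, G.Adj u (x i) ↔ i = a ∨ i = b := by
    intro i; have := Set.ext_iff.mp hSu i; simpa using this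
  have hv : ∀ i : Fin 4, G.Adj v (x i) ↔ i = c ∨ i = d := by
    intro i; have := Set.ext_iff.mp hSv i; simpa using this
  have key : ∀ a b : Fin 4, a ≠ b → b ≠ a + 1 → a ≠ b + 1 → b = a + 2 := by decide
  have hua : G.Adj u (x a) := (hu a).mpr (Or.inl rfl)
  have hub : G.Adj u (x b) := (hu b).mpr (Or.inr rfl)
  have hvc : G.Adj v (x c) := (hv c).mpr (Or.inl rfl)
  have hvd : G.Adj v (x d) := (hv d).mpr (Or.inr rfl)
  have hb : b = a + 2 := by
    refine key a b hab (fun h => ?_) (fun h => ?_)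
    · exact htri u (x a) (x b) hua hub (by rw [h]; exact hcyc a)
    · exact htri u (x b) (x a) hub hua (by rw [h]; exact hcyc b)
  have hd : d = c + 2 := by
    refine key c d hcd (fun h => ?_) (fun h => ?_)
    · exact htri v (x c) (x d) hvc hvd (by rw [h]; exact hcyc c)
    · exact htri v (x d) (x c) hvd hvc (by rw [h]; exact hcyc d)
  subst hb hd
  have hva : ¬ G.Adj v (x a) := fun h => htri u v (x a) huv hua h
  have hva2 : ¬ G.Adj v (x (a + 2)) := fun h => htri u v (x (a + 2)) huv hub h
  have hac : a ≠ c := fun h => hva ((hv a).mpr (Or.inl h))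
  have hac2 : a ≠ c + 2 := fun h => hva ((hv a).mpr (Or.inr h))
  have key2 : ∀ a c : Fin 4, a ≠ c → a ≠ c + 2 →
      (a+1 = c ∨ a+1 = c+2) ∧ (a+3 = c ∨ a+3 = c+2) := by decide
  have hv1 : G.Adj v (x (a + 1)) := (hv (a+1)).mpr (key2 a c hac hac2).1
  have hv3 : G.Adj v (x (a + 3)) := (hv (a+3)).mpr (key2 a c hac hac2).2
  -- cycle edges
  have e1 : a + 3 + 1 = a := by
    have : (3 : Fin 4) + 1 = 0 := by decide
    rw [add_assoc, this, add_zero]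
  have e2 : a + 2 + 1 = a + 3 := by
    have : (2 : Fin 4) + 1 = 3 := by decide
    rw [add_assoc, this]
  have hA1 : G.Adj (x (a + 3)) (x a) := by have h := hcyc (a + 3); rwa [e1] at h
  have hA2 : G.Adj (x (a + 3)) (x (a + 2)) := by
    have h := hcyc (a + 2); rw [e2] at h; exact h.symm
  have hA3 : G.Adj (x (a + 1)) (x a) := (hcyc a).symm
  have e3 : a + 1 + 1 = a + 2 := by
    have : (1 : Fin 4) + 1 = 2 := by decide
    rw [add_assoc, this]
  have hA4 : G.Adj (x (a + 1)) (x (a + 2)) := by have h := hcyc (a + 1); rwa [e3] at h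
  -- inequalities
  have hune : ∀ i, u ≠ x i := fun i h => hur ⟨i, h.symm⟩
  have hvne : ∀ i, v ≠ x i := fun i h => hvr ⟨i, h.symm⟩
  have hxne : ∀ i j : Fin 4, i ≠ j → x i ≠ x j := fun i j hij h => hij (hinj h)
  have H4 : ∀ a : Fin 4, a ≠ a+1 ∧ a ≠ a+2 ∧ a ≠ a+3 ∧ a+1 ≠ a+2 ∧ a+1 ≠ a+3 ∧ a+2 ≠ a+3 := by
    decide
  apply hplanar.2
  refine ⟨fun w => {Sum.elim (![u, x (a+1), x (a+3)]) (![v, x a, x (a+2)]) w},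
    fun w => ⟨_, rfl⟩, ?_, fun w => induce_singleton_connected' G _, ?_⟩
  · intro w1 w2 hne
    rw [Set.disjoint_singleton]
    rcases w1 with i | i <;> rcases w2 with j | j <;> fin_cases i <;> fin_cases j <;>
      simp only [Sum.elim_inl, Sum.elim_inr, Matrix.cons_val_zero, Matrix.cons_val_one,
        Matrix.head_cons, Matrix.cons_val_two, Matrix.tail_cons] <;>
      first
        | exact absurd rfl hne
        | exact huv.ne
        | exact huv.ne.symm
        | exact hune _
        | exact (hune _).symm
        | exact hvne _
        | exact (hvne _).symm
        | exact hxne _ _ (H4 a).1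
        | exact (hxne _ _ (H4 a).1).symm
        | exact hxne _ _ (H4 a).2.1
        | exact (hxne _ _ (H4 a).2.1).symm
        | exact hxne _ _ (H4 a).2.2.1
        | exact (hxne _ _ (H4 a).2.2.1).symm
        | exact hxne _ _ (H4 a).2.2.2.1
        | exact (hxne _ _ (H4 a).2.2.2.1).symm
        | exact hxne _ _ (H4 a).2.2.2.2.1
        | exact (hxne _ _ (H4 a).2.2.2.2.1).symm
        | exact hxne _ _ (H4 a).2.2.2.2.2
        | exact (hxne _ _ (H4 a).2.2.2.2.2).symm
  · have big : ∀ (i j : Fin 3),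
        ∃ p ∈ ({Sum.elim (![u, x (a+1), x (a+3)]) (![v, x a, x (a+2)]) (Sum.inl i)} : Set V),
          ∃ q ∈ ({Sum.elim (![u, x (a+1), x (a+3)]) (![v, x a, x (a+2)]) (Sum.inr j)} : Set V),
            G.Adj p q := by
      intro i j
      fin_cases i <;> fin_cases j <;>
        refine ⟨_, rfl, _, rfl, ?_⟩ <;>
        simp only [Sum.elim_inl, Sum.elim_inr, Matrix.cons_val_zero, Matrix.cons_val_one,
          Matrix.head_cons, Matrix.cons_val_two, Matrix.tail_cons] <;>
        first
          | exact huv | exact hua | exact hub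
          | exact hv1.symm | exact hv3.symm
          | exact hA1 | exact hA2 | exact hA3 | exact hA4
    rintro (i | i) (j | j) hadj'
    · simp at hadj'
    · exact big i j
    · obtain ⟨p, hp, q, hq, h⟩ := big j i
      exact ⟨q, hq, p, hp, h.symm⟩
    · simp at hadj'
end
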